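/- arXiv:1303.2825 — 8 statements merged into one kernel-verified Lean document; each statement's English description precedes it below -/
import Mathlib

section
/- (Christoffel–Darboux formula) Let μ be a positive Borel measure on ℝ with infinite support and all moments finite, let (p_n)_{n≥0} be a system of orthogonal polynomials with respect to μ, let k_n denote the leading coefficient of p_n and h_n := ∫ p_n(x)^2 dμ(x). Then for all real x ≠ y and all n ≥ 0: ∑_{j=0}^{n} p_j(x) p_j(y) / h_j = (k_n / (h_n k_{n+1})) · (p_{n+1}(x) p_n(y) − p_n(x) p_{n+1}(y)) / (x − y). -/
open MeasureTheory Polynomial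

/-- The support of a positive Borel measure on `ℝ`. -/
def measureSupport (μ : Measure ℝ) : Set ℝ := {x : ℝ | ∀ U ∈ nhds x, 0 < μ U}

variable {μ : Measure ℝ} {p : ℕ → ℝ[X]}

lemma integrable_pow' (hmom : ∀ n : ℕ, Integrable (fun x : ℝ => |x| ^ n) μ) (n : ℕ) :
    Integrable (fun x : ℝ => x ^ n) μ := by
  refine (hmom n).mono' ((measurable_id.pow_const n).aestronglyMeasurable) ?_
  filter_upwards with x
  simp [abs_pow, abs_abs, le_refl]

lemma integrable_eval (hmom : ∀ n : ℕ, Integrable (fun x : ℝ => |x| ^ n) μ) (q : ℝ[X]) :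
    Integrable (fun x => q.eval x) μ := by
  have h : (fun x : ℝ => q.eval x)
      = fun x => ∑ i ∈ Finset.range (q.natDegree + 1), q.coeff i * x ^ i := by
    funext x; exact q.eval_eq_sum_range x
  rw [h]
  exact integrable_finset_sum _ fun i _ => (integrable_pow' hmom i).const_mul _

lemma integrable_eval_mul (hmom : ∀ n : ℕ, Integrable (fun x : ℝ => |x| ^ n) μ)
    (q r : ℝ[X]) : Integrable (fun x => q.eval x * r.eval x) μ := by
  simpa using integrable_eval hmom (q * r)

lemma h_pos (hsupp : (measureSupport μ).Infinite)
    (hmom : ∀ n : ℕ, Integrable (fun x : ℝ => |x| ^ n) μ)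
    (q : ℝ[X]) (hq : q ≠ 0) : 0 < ∫ t, q.eval t ^ 2 ∂μ := by
  have hint : Integrable (fun t : ℝ => q.eval t ^ 2) μ := by
    have := integrable_eval_mul hmom q q
    simpa [sq] using this
  rw [integral_pos_iff_support_of_nonneg (fun t => sq_nonneg _) hint]
  by_contra h
  push_neg at h
  have h0 : μ (Function.support fun t => q.eval t ^ 2) = 0 := le_antisymm h zero_le
  have hsub : measureSupport μ ⊆ {x | q.IsRoot x} := by
    intro x hx
    by_contra hroot
    have hopen : IsOpen {t : ℝ | q.eval t ≠ 0} := by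
      have : Continuous fun t : ℝ => q.eval t := q.continuous
      exact isOpen_ne.preimage this
    have hmem : {t : ℝ | q.eval t ≠ 0} ∈ nhds x := hopen.mem_nhds hroot
    have hpos := hx _ hmem
    have hle : μ {t : ℝ | q.eval t ≠ 0} ≤ μ (Function.support fun t => q.eval t ^ 2) := by
      apply measure_mono
      intro t ht
      simpa [Function.mem_support, pow_eq_zero_iff] using ht
    rw [h0] at hle
    exact absurd (le_antisymm hle zero_le) (ne_of_gt hpos)
  exact hsupp ((Polynomial.finite_setOf_isRoot hq).subset hsub)

lemma p_ne_zero (hdeg : ∀ n : ℕ, (p n).degree = n) (n : ℕ) : p n ≠ 0 := by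
  intro h
  have := hdeg n
  rw [h, degree_zero] at this
  exact (by simp : (⊥ : WithBot ℕ) ≠ (n : WithBot ℕ)) this

lemma k_ne_zero (hdeg : ∀ n : ℕ, (p n).degree = n) (n : ℕ) : (p n).coeff n ≠ 0 := by
  have hnd : (p n).natDegree = n := natDegree_eq_of_degree_eq_some (hdeg n)
  have h := leadingCoeff_ne_zero.mpr (p_ne_zero hdeg n)
  simpa [leadingCoeff, hnd] using h

lemma integral_split (hmom : ∀ n : ℕ, Integrable (fun x : ℝ => |x| ^ n) μ)
    (q r s : ℝ[X]) (c : ℝ) :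
    ∫ x, (q + C c * r).eval x * s.eval x ∂μ
      = (∫ x, q.eval x * s.eval x ∂μ) + c * ∫ x, r.eval x * s.eval x ∂μ := by
  have h1 := integrable_eval_mul hmom q s
  have h2 := integrable_eval_mul hmom r s
  have he : (fun x => (q + C c * r).eval x * s.eval x)
      = fun x => q.eval x * s.eval x + c * (r.eval x * s.eval x) := by
    funext x; simp; ring
  rw [he, integral_add h1 (h2.const_mul c), integral_const_mul c _]

lemma peel_lt (hdeg : ∀ n : ℕ, (p n).degree = n) (q : ℝ[X]) (n : ℕ) (hq : q.degree ≤ n) :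
    (q - C (q.coeff n / (p n).coeff n) * p n).degree < n := by
  rw [degree_lt_iff_coeff_zero]
  intro m hm
  have hm' : n ≤ m := by exact_mod_cast hm
  rcases eq_or_lt_of_le hm' with rfl | h
  · have hk := k_ne_zero hdeg n
    rw [coeff_sub, coeff_C_mul, div_mul_cancel₀ _ hk, sub_self]
  · have hq1 : q.coeff m = 0 :=
      coeff_eq_zero_of_degree_lt (lt_of_le_of_lt hq (by exact_mod_cast h))
    have hp1 : (p n).coeff m = 0 :=
      coeff_eq_zero_of_degree_lt (by rw [hdeg n]; exact_mod_cast h)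
    simp [coeff_sub, coeff_C_mul, hq1, hp1]

lemma orth_lt (hmom : ∀ n : ℕ, Integrable (fun x : ℝ => |x| ^ n) μ)
    (hdeg : ∀ n : ℕ, (p n).degree = n)
    (horth : ∀ m n : ℕ, m ≠ n → ∫ x, (p m).eval x * (p n).eval x ∂μ = 0) :
    ∀ (q : ℝ[X]) (n : ℕ), q.degree < n → ∫ x, q.eval x * (p n).eval x ∂μ = 0 := by
  suffices H : ∀ (N : ℕ) (q : ℝ[X]), q.natDegree ≤ N → ∀ n : ℕ, q.degree < n →
      ∫ x, q.eval x * (p n).eval x ∂μ = 0 by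
    exact fun q n h => H q.natDegree q le_rfl n h
  intro N
  induction N with
  | zero =>
    intro q hq n hn
    rcases eq_or_ne q 0 with rfl | hq0
    · simp
    have hd : q.degree ≤ (0 : ℕ) := by
      rw [degree_eq_natDegree hq0]; exact_mod_cast hq
    set c := q.coeff 0 / (p 0).coeff 0 with hc
    have hr := peel_lt hdeg q 0 hd
    have hr0 : q - C c * p 0 = 0 := by
      rw [← degree_eq_bot]
      exact Nat.WithBot.lt_zero_iff.mp (by exact_mod_cast hr)
    have hqe : q = C c * p 0 := by linear_combination (norm := ring_nf) hr0
    have hn0 : (0 : ℕ) ≠ n := by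
      intro h; subst h
      exact absurd hn (by simp [hd, ← degree_eq_bot, degree_eq_natDegree hq0])
    rw [hqe]
    have := integral_split hmom 0 (p 0) (p n) c
    simpa [horth 0 n hn0] using this
  | succ N IH =>
    intro q hq n hn
    rcases le_or_gt q.natDegree N with hle | hlt
    · exact IH q hle n hn
    have hq0 : q ≠ 0 := by
      intro h; rw [h] at hlt; simp at hlt
    have hnd : q.natDegree = N + 1 := le_antisymm hq hlt
    have hd : q.degree ≤ (N + 1 : ℕ) := by rw [degree_eq_natDegree hq0, hnd]
    set c := q.coeff (N + 1) / (p (N + 1)).coeff (N + 1) with hc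
    set r := q - C c * p (N + 1) with hrdef
    have hr := peel_lt hdeg q (N + 1) hd
    have hrn : r.natDegree ≤ N := by
      rcases eq_or_ne r 0 with h | h
      · simp [h]
      · exact Nat.lt_succ_iff.mp ((natDegree_lt_iff_degree_lt h).mpr hr)
    have hmn : ((N : ℕ) + 1 : ℕ) < n := by
      have : ((N + 1 : ℕ) : WithBot ℕ) < n := by
        rw [← hnd, ← degree_eq_natDegree hq0]; exact hn
      exact_mod_cast this
    have hrlt : r.degree < n := lt_trans hr (by exact_mod_cast hmn)
    have h1 : ∫ x, r.eval x * (p n).eval x ∂μ = 0 := IH r hrn n hrlt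
    have h2 : ∫ x, (p (N + 1)).eval x * (p n).eval x ∂μ = 0 :=
      horth (N + 1) n (by omega)
    have hqe : q = r + C c * p (N + 1) := by rw [hrdef]; ring
    rw [hqe, integral_split hmom r (p (N + 1)) (p n) c, h1, h2]
    ring

lemma sq_eq (s : ℝ[X]) : (∫ x, s.eval x * s.eval x ∂μ) = ∫ t, s.eval t ^ 2 ∂μ := by
  congr 1; funext x; ring

lemma integral_coeff (hmom : ∀ n : ℕ, Integrable (fun x : ℝ => |x| ^ n) μ)
    (hdeg : ∀ n : ℕ, (p n).degree = n)
    (horth : ∀ m n : ℕ, m ≠ n → ∫ x, (p m).eval x * (p n).eval x ∂μ = 0)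
    (q : ℝ[X]) (n : ℕ) (hq : q.degree ≤ n) :
    ∫ x, q.eval x * (p n).eval x ∂μ
      = q.coeff n / (p n).coeff n * ∫ t, (p n).eval t ^ 2 ∂μ := by
  set c := q.coeff n / (p n).coeff n with hc
  have hqe : q = (q - C c * p n) + C c * p n := by ring
  rw [show (∫ x, q.eval x * (p n).eval x ∂μ)
      = ∫ x, ((q - C c * p n) + C c * p n).eval x * (p n).eval x ∂μ by rw [← hqe]]
  rw [integral_split hmom _ _ _ c,
    orth_lt hmom hdeg horth _ n (peel_lt hdeg q n hq), sq_eq]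
  ring

lemma expand (hmom : ∀ n : ℕ, Integrable (fun x : ℝ => |x| ^ n) μ)
    (hdeg : ∀ n : ℕ, (p n).degree = n)
    (horth : ∀ m n : ℕ, m ≠ n → ∫ x, (p m).eval x * (p n).eval x ∂μ = 0)
    (hpos : ∀ n : ℕ, (∫ t, (p n).eval t ^ 2 ∂μ) ≠ 0) :
    ∀ (n : ℕ) (q : ℝ[X]), q.degree ≤ n →
      q = ∑ j ∈ Finset.range (n + 1),
        C ((∫ x, q.eval x * (p j).eval x ∂μ) / ∫ t, (p j).eval t ^ 2 ∂μ) * p j := by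
  intro n
  induction n with
  | zero =>
    intro q hq
    have hr := peel_lt hdeg q 0 hq
    have hr0 : q - C (q.coeff 0 / (p 0).coeff 0) * p 0 = 0 := by
      rw [← degree_eq_bot]
      exact Nat.WithBot.lt_zero_iff.mp (by exact_mod_cast hr)
    have hco : (∫ x, q.eval x * (p 0).eval x ∂μ) / (∫ t, (p 0).eval t ^ 2 ∂μ)
        = q.coeff 0 / (p 0).coeff 0 := by
      rw [integral_coeff hmom hdeg horth q 0 hq]
      exact mul_div_cancel_right₀ _ (hpos 0)
    have hq0 : q = C (q.coeff 0 / (p 0).coeff 0) * p 0 := sub_eq_zero.mp hr0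
    rw [Finset.sum_range_one, hco]
    exact hq0
  | succ n IH =>
    intro q hq
    set c := q.coeff (n + 1) / (p (n + 1)).coeff (n + 1) with hc
    set r := q - C c * p (n + 1) with hrdef
    have hr := peel_lt hdeg q (n + 1) hq
    have hrle : r.degree ≤ (n : ℕ) := by
      rcases eq_or_ne r 0 with h | h
      · simp [h]
      · rw [degree_eq_natDegree h]
        exact_mod_cast Nat.lt_succ_iff.mp ((natDegree_lt_iff_degree_lt h).mpr hr)
    have hIH := IH r hrle
    have hqe : q = r + C c * p (n + 1) := by rw [hrdef]; ring
    have hsame : ∀ j ∈ Finset.range (n + 1),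
        C ((∫ x, q.eval x * (p j).eval x ∂μ) / ∫ t, (p j).eval t ^ 2 ∂μ) * p j
          = C ((∫ x, r.eval x * (p j).eval x ∂μ) / ∫ t, (p j).eval t ^ 2 ∂μ) * p j := by
      intro j hj
      have hj' : j < n + 1 := Finset.mem_range.mp hj
      have : ∫ x, q.eval x * (p j).eval x ∂μ = ∫ x, r.eval x * (p j).eval x ∂μ := by
        conv_lhs => rw [hqe]
        rw [integral_split hmom _ _ _ c, horth (n + 1) j (by omega)]
        ring
      rw [this]
    have htop : (∫ x, q.eval x * (p (n + 1)).eval x ∂μ)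
        / (∫ t, (p (n + 1)).eval t ^ 2 ∂μ) = c := by
      conv_lhs => rw [hqe]
      rw [integral_split hmom _ _ _ c,
        orth_lt hmom hdeg horth r (n + 1) (lt_of_le_of_lt hrle (by exact_mod_cast Nat.lt_succ_self n)),
        sq_eq, zero_add]
      exact mul_div_cancel_right₀ c (hpos (n + 1))
    rw [Finset.sum_range_succ, Finset.sum_congr rfl hsame, ← hIH, htop, ← hqe]

lemma recur (hmom : ∀ n : ℕ, Integrable (fun x : ℝ => |x| ^ n) μ)
    (hdeg : ∀ n : ℕ, (p n).degree = n)
    (horth : ∀ m n : ℕ, m ≠ n → ∫ x, (p m).eval x * (p n).eval x ∂μ = 0)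
    (hpos : ∀ n : ℕ, (∫ t, (p n).eval t ^ 2 ∂μ) ≠ 0) (n : ℕ) :
    ∃ B : ℝ, ∀ z : ℝ,
      z * (p (n + 1)).eval z
        = (p (n + 1)).coeff (n + 1) / (p (n + 2)).coeff (n + 2) * (p (n + 2)).eval z
          + B * (p (n + 1)).eval z
          + (p n).coeff n / (p (n + 1)).coeff (n + 1)
              * ((∫ t, (p (n + 1)).eval t ^ 2 ∂μ) / ∫ t, (p n).eval t ^ 2 ∂μ)
              * (p n).eval z := by
  set q : ℝ[X] := X * p (n + 1) with hqdef
  have hqd : q.degree ≤ ((n + 2 : ℕ) : WithBot ℕ) := by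
    rw [hqdef, degree_mul, degree_X, hdeg (n + 1)]
    exact_mod_cast (by omega : 1 + (n + 1) ≤ n + 2)
  have hE := expand hmom hdeg horth hpos (n + 2) q hqd
  refine ⟨(∫ x, q.eval x * (p (n + 1)).eval x ∂μ) / (∫ t, (p (n + 1)).eval t ^ 2 ∂μ),
    fun z => ?_⟩
  have hz := congrArg (Polynomial.eval z) hE
  rw [Polynomial.eval_finset_sum] at hz
  simp only [eval_mul, eval_C, eval_X] at hz
  rw [Finset.sum_range_succ, Finset.sum_range_succ, Finset.sum_range_succ] at hz
  have hzero : ∑ j ∈ Finset.range n,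
      (∫ x, q.eval x * (p j).eval x ∂μ) / (∫ t, (p j).eval t ^ 2 ∂μ) * (p j).eval z
        = 0 := by
    apply Finset.sum_eq_zero
    intro j hj
    have hj' : j < n := Finset.mem_range.mp hj
    have h1 : (∫ x, q.eval x * (p j).eval x ∂μ)
        = ∫ x, (X * p j).eval x * (p (n + 1)).eval x ∂μ := by
      congr 1; funext x; simp [hqdef]; ring
    have h2 : (X * p j).degree < ((n + 1 : ℕ) : WithBot ℕ) := by
      rw [degree_mul, degree_X, hdeg j]
      exact_mod_cast (by omega : 1 + j < n + 1)
    rw [h1, orth_lt hmom hdeg horth _ _ h2, zero_div, zero_mul]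
  have hcn : (∫ x, q.eval x * (p n).eval x ∂μ)
      = (p n).coeff n / (p (n + 1)).coeff (n + 1) * ∫ t, (p (n + 1)).eval t ^ 2 ∂μ := by
    have h1 : (∫ x, q.eval x * (p n).eval x ∂μ)
        = ∫ x, (X * p n).eval x * (p (n + 1)).eval x ∂μ := by
      congr 1; funext x; simp [hqdef]; ring
    have h2 : (X * p n).degree ≤ ((n + 1 : ℕ) : WithBot ℕ) := by
      rw [degree_mul, degree_X, hdeg n]
      exact_mod_cast (by omega : 1 + n ≤ n + 1)
    rw [h1, integral_coeff hmom hdeg horth (X * p n) (n + 1) h2, coeff_X_mul]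
  have hcn2 : (∫ x, q.eval x * (p (n + 2)).eval x ∂μ)
      = (p (n + 1)).coeff (n + 1) / (p (n + 2)).coeff (n + 2)
          * ∫ t, (p (n + 2)).eval t ^ 2 ∂μ := by
    rw [integral_coeff hmom hdeg horth q (n + 2) hqd, hqdef, coeff_X_mul]
  rw [hzero, hcn, hcn2, mul_div_cancel_right₀ _ (hpos (n + 2)), zero_add] at hz
  have heq : eval z q = z * (p (n + 1)).eval z := by rw [hqdef]; simp
  rw [heq] at hz
  rw [hz]
  ring


/-- **Christoffel–Darboux formula.** For orthogonal polynomials `pₙ` with leading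
coefficients `kₙ` and quadratic norms `hₙ = ∫ pₙ² dμ`, and `x ≠ y`:
`∑_{j=0}^{n} pⱼ(x)pⱼ(y)/hⱼ
  = (kₙ/(hₙ k_{n+1})) (p_{n+1}(x)pₙ(y) − pₙ(x)p_{n+1}(y))/(x − y)`. -/
theorem christoffel_darboux
    (μ : Measure ℝ)
    (hsupp : (measureSupport μ).Infinite)
    (hmom : ∀ n : ℕ, Integrable (fun x : ℝ => |x| ^ n) μ)
    (p : ℕ → Polynomial ℝ)
    (hdeg : ∀ n : ℕ, (p n).degree = n)
    (horth : ∀ m n : ℕ, m ≠ n → ∫ x, (p m).eval x * (p n).eval x ∂μ = 0) :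
    ∀ (n : ℕ) (x y : ℝ), x ≠ y →
      ∑ j ∈ Finset.range (n + 1),
          (p j).eval x * (p j).eval y / (∫ t, (p j).eval t ^ 2 ∂μ) =
        (p n).coeff n / ((∫ t, (p n).eval t ^ 2 ∂μ) * (p (n + 1)).coeff (n + 1)) *
          (((p (n + 1)).eval x * (p n).eval y - (p n).eval x * (p (n + 1)).eval y) /
            (x - y)) := by
  have hpos : ∀ n : ℕ, (∫ t, (p n).eval t ^ 2 ∂μ) ≠ 0 :=
    fun n => (h_pos hsupp hmom (p n) (p_ne_zero hdeg n)).ne'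
  have hk := k_ne_zero hdeg
  intro n
  induction n with
  | zero =>
    intro x y hxy
    have hxy' : x - y ≠ 0 := sub_ne_zero.mpr hxy
    have hp0 : p 0 = C ((p 0).coeff 0) := eq_C_of_degree_le_zero (hdeg 0).le
    have hp1 : ∀ z : ℝ, (p 1).eval z = (p 1).coeff 0 + (p 1).coeff 1 * z := by
      intro z
      have h1 : (p 1).natDegree = 1 := natDegree_eq_of_degree_eq_some (hdeg 1)
      rw [Polynomial.eval_eq_sum_range, h1]
      simp [Finset.sum_range_succ]
    have he0 : ∀ z : ℝ, (p 0).eval z = (p 0).coeff 0 := by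
      intro z; rw [hp0]; simp
    rw [Finset.sum_range_one, he0 x, he0 y, hp1 x, hp1 y]
    field_simp [hpos 0, hk 1, hxy']
    ring
  | succ n IH =>
    intro x y hxy
    have hxy' : x - y ≠ 0 := sub_ne_zero.mpr hxy
    obtain ⟨B, hB⟩ := recur hmom hdeg horth hpos n
    have h1 := hB x
    have h2 := hB y
    have key : (x - y) * ((p (n + 1)).eval x * (p (n + 1)).eval y)
        = (p (n + 1)).coeff (n + 1) / (p (n + 2)).coeff (n + 2)
            * ((p (n + 2)).eval x * (p (n + 1)).eval y
              - (p (n + 1)).eval x * (p (n + 2)).eval y)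
          - (p n).coeff n / (p (n + 1)).coeff (n + 1)
              * ((∫ t, (p (n + 1)).eval t ^ 2 ∂μ) / ∫ t, (p n).eval t ^ 2 ∂μ)
              * ((p (n + 1)).eval x * (p n).eval y
                - (p n).eval x * (p (n + 1)).eval y) := by
      linear_combination (p (n + 1)).eval y * h1 - (p (n + 1)).eval x * h2
    have step : (p (n + 1)).eval x * (p (n + 1)).eval y
          / (∫ t, (p (n + 1)).eval t ^ 2 ∂μ)
        = (p (n + 1)).coeff (n + 1)
            / ((∫ t, (p (n + 1)).eval t ^ 2 ∂μ) * (p (n + 2)).coeff (n + 2)) *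
            (((p (n + 2)).eval x * (p (n + 1)).eval y
              - (p (n + 1)).eval x * (p (n + 2)).eval y) / (x - y))
          - (p n).coeff n / ((∫ t, (p n).eval t ^ 2 ∂μ) * (p (n + 1)).coeff (n + 1)) *
            (((p (n + 1)).eval x * (p n).eval y
              - (p n).eval x * (p (n + 1)).eval y) / (x - y)) := by
      have key' := key
      field_simp [hk (n + 1), hk (n + 2), hpos n] at key'
      field_simp [hxy', hpos n, hpos (n + 1), hk (n + 1), hk (n + 2)]
      linear_combination key'
    rw [Finset.sum_range_succ, IH x y hxy, step]
    ring
end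

section
/- Let μ be a positive Borel measure on ℝ with infinite support and all moments finite, and let (p_n)_{n≥0} be a system of orthogonal polynomials with respect to μ. Then the zeros of p_n and p_{n+1} alternate: if y < z are two consecutive real zeros of p_{n+1}, then p_n has a zero in the open interval (y, z). -/
open MeasureTheory Polynomial

section Aux

variable (μ : Measure ℝ)

lemma integrable_poly (hmom : ∀ n : ℕ, Integrable (fun x : ℝ => |x| ^ n) μ)
    (q : Polynomial ℝ) : Integrable (fun x => q.eval x) μ := by
  have h : ∀ x : ℝ, q.eval x = ∑ i ∈ Finset.range (q.natDegree + 1), q.coeff i * x ^ i :=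
    fun x => q.eval_eq_sum_range x
  simp only [h]
  apply integrable_finset_sum
  intro i _
  have hx : Integrable (fun x : ℝ => x ^ i) μ := by
    refine (hmom i).mono' ((continuous_pow i).aestronglyMeasurable) ?_
    filter_upwards with x
    rw [Real.norm_eq_abs, abs_pow]
  exact hx.const_mul _

lemma integral_poly_pos (hsupp : (measureSupport μ).Infinite)
    (hmom : ∀ n : ℕ, Integrable (fun x : ℝ => |x| ^ n) μ)
    (q : Polynomial ℝ) (hq : q ≠ 0) (hnn : ∀ x, 0 ≤ q.eval x) :
    0 < ∫ x, q.eval x ∂μ := by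
  rw [integral_pos_iff_support_of_nonneg hnn (integrable_poly μ hmom q)]
  obtain ⟨x0, hx0s, hx0⟩ : ∃ x0 ∈ measureSupport μ, q.eval x0 ≠ 0 := by
    obtain ⟨x0, hx0⟩ := (hsupp.diff (Polynomial.finite_setOf_isRoot hq)).nonempty
    exact ⟨x0, hx0.1, hx0.2⟩
  refine hx0s _ (IsOpen.mem_nhds ?_ hx0)
  have h2 : Function.support (fun x => q.eval x) = (fun x => q.eval x) ⁻¹' {0}ᶜ := by
    ext x; simp [Function.mem_support]
  rw [h2]
  exact isOpen_compl_singleton.preimage q.continuous_aeval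

variable (hmom : ∀ n : ℕ, Integrable (fun x : ℝ => |x| ^ n) μ)
  (p : ℕ → Polynomial ℝ) (hdeg : ∀ n : ℕ, (p n).degree = n)
  (horth : ∀ m n : ℕ, m ≠ n → ∫ x, (p m).eval x * (p n).eval x ∂μ = 0)

include hmom hdeg horth in
lemma orth_low_aux (m : ℕ) : ∀ (k : ℕ), k ≤ m → ∀ q : Polynomial ℝ, q.degree < (k : ℕ) →
    ∫ x, (p m).eval x * q.eval x ∂μ = 0 := by
  intro k
  induction k with
  | zero =>
    intro _ q hq
    rw [Nat.cast_zero, Nat.WithBot.lt_zero_iff, degree_eq_bot] at hq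
    simp [hq]
  | succ k ih =>
    intro hk q hq
    by_cases hlt : q.degree < (k : ℕ)
    · exact ih (by omega) q hlt
    have hq0 : q ≠ 0 := by
      rintro rfl; exact hlt (by rw [degree_zero]; exact WithBot.bot_lt_coe k)
    have hdq : q.degree = (k : ℕ) := by
      have h1 : q.degree ≤ (k : ℕ) := by
        rw [degree_eq_natDegree hq0] at hq ⊢
        exact_mod_cast Nat.lt_succ_iff.mp (by exact_mod_cast hq)
      exact le_antisymm h1 (not_lt.mp hlt)
    have hpk0 : p k ≠ 0 := fun h => by simpa [h] using hdeg k
    have hlc : (p k).leadingCoeff ≠ 0 := leadingCoeff_ne_zero.mpr hpk0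
    set c : ℝ := q.leadingCoeff / (p k).leadingCoeff with hc
    have hcne : c ≠ 0 := div_ne_zero (leadingCoeff_ne_zero.mpr hq0) hlc
    set r : Polynomial ℝ := q - C c * p k with hr
    have hdr : r.degree < (k : ℕ) := by
      rw [hr]
      have h1 : (C c * p k).degree = q.degree := by
        rw [degree_C_mul hcne, hdeg k, hdq]
      have h2 : (C c * p k).leadingCoeff = q.leadingCoeff := by
        rw [leadingCoeff_mul, leadingCoeff_C, hc, div_mul_cancel₀ _ hlc]
      have := degree_sub_lt h1.symm hq0 h2.symm
      rw [hdq] at this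
      exact this
    have hqeq : q = C c * p k + r := by rw [hr]; ring
    have hik : ∫ x, (p m).eval x * (p k).eval x ∂μ = 0 :=
      horth m k (by omega)
    have hir : ∫ x, (p m).eval x * r.eval x ∂μ = 0 := ih (by omega) r hdr
    have hint1 : Integrable (fun x => (p m).eval x * (p k).eval x) μ := by
      simpa using integrable_poly μ hmom (p m * p k)
    have hint2 : Integrable (fun x => (p m).eval x * r.eval x) μ := by
      simpa using integrable_poly μ hmom (p m * r)
    calc ∫ x, (p m).eval x * q.eval x ∂μ
        = ∫ x, (c * ((p m).eval x * (p k).eval x) + (p m).eval x * r.eval x) ∂μ := by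
          congr 1; funext x; rw [hqeq]; simp; ring
      _ = c * ∫ x, (p m).eval x * (p k).eval x ∂μ + ∫ x, (p m).eval x * r.eval x ∂μ := by
          rw [integral_add (hint1.const_mul c) hint2, MeasureTheory.integral_const_mul]
      _ = 0 := by rw [hik, hir]; ring

include hmom hdeg horth in
lemma orth_low (m : ℕ) (q : Polynomial ℝ) (hq : q.degree < (m : ℕ)) :
    ∫ x, (p m).eval x * q.eval x ∂μ = 0 :=
  orth_low_aux μ hmom p hdeg horth m m le_rfl q hq

include hmom hdeg horth in
lemma wronskian_ne_zero (hsupp : (measureSupport μ).Infinite) (n : ℕ) (x0 : ℝ) :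
    (derivative (p (n+1))).eval x0 * (p n).eval x0
      - (derivative (p n)).eval x0 * (p (n+1)).eval x0 ≠ 0 := by
  intro hW
  have hp0 : ∀ m : ℕ, p m ≠ 0 := fun m h => by simpa [h] using hdeg m
  set a : ℝ := (p (n+1)).eval x0 with ha
  set b : ℝ := (p n).eval x0 with hb
  by_cases hab : a = 0 ∧ b = 0
  · obtain ⟨ha0, hb0⟩ := hab
    obtain ⟨h, hh⟩ : (X - C x0) ∣ p n := dvd_iff_isRoot.mpr hb0
    obtain ⟨k, hk⟩ : (X - C x0) ∣ p (n+1) := dvd_iff_isRoot.mpr ha0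
    have hkne : k ≠ 0 := fun h0 => hp0 (n+1) (by rw [hk, h0, mul_zero])
    have hndk : k.natDegree = n := by
      have := hdeg (n+1)
      rw [hk, degree_mul, degree_X_sub_C, degree_eq_natDegree hkne] at this
      exact_mod_cast by
        have h1 : (1 + k.natDegree : WithBot ℕ) = ((n+1 : ℕ) : WithBot ℕ) := by exact_mod_cast this
        have h2 : 1 + k.natDegree = n + 1 := by exact_mod_cast h1
        omega
    have hdk : k.degree = (n : ℕ) := by rw [degree_eq_natDegree hkne, hndk]
    have hmain : p n * k = p (n+1) * h := by
      have : (X - C x0) * (p n * k) = (X - C x0) * (p (n+1) * h) := by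
        rw [hk, hh]; ring
      exact mul_left_cancel₀ (X_sub_C_ne_zero x0) this
    have hih : ∫ x, (p (n+1)).eval x * h.eval x ∂μ = 0 := by
      refine orth_low μ hmom p hdeg horth (n+1) h ?_
      have hd : h.degree ≤ (p n).degree := degree_le_of_dvd ⟨X - C x0, by rw [hh]; ring⟩ (hp0 n)
      calc h.degree ≤ (n : ℕ) := hd.trans_eq (hdeg n)
        _ < ((n+1 : ℕ) : WithBot ℕ) := by exact_mod_cast Nat.lt_succ_self n
    have hink : ∫ x, (p n).eval x * k.eval x ∂μ = 0 := by
      rw [show (fun x => (p n).eval x * k.eval x) = fun x => (p (n+1)).eval x * h.eval x by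
        funext x
        have := congrArg (eval x) hmain
        simpa using this]
      exact hih
    have hlc : (p n).leadingCoeff ≠ 0 := leadingCoeff_ne_zero.mpr (hp0 n)
    set c : ℝ := k.leadingCoeff / (p n).leadingCoeff with hc
    have hcne : c ≠ 0 := div_ne_zero (leadingCoeff_ne_zero.mpr hkne) hlc
    set r : Polynomial ℝ := k - C c * p n with hr
    have hdr : r.degree < (n : ℕ) := by
      have h1 : (C c * p n).degree = k.degree := by rw [degree_C_mul hcne, hdeg n, hdk]
      have h2 : (C c * p n).leadingCoeff = k.leadingCoeff := by
        rw [leadingCoeff_mul, leadingCoeff_C, hc, div_mul_cancel₀ _ hlc]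
      have := degree_sub_lt h1.symm hkne h2.symm
      rwa [hdk] at this
    have hir : ∫ x, (p n).eval x * r.eval x ∂μ = 0 := orth_low μ hmom p hdeg horth n r hdr
    have hsq : 0 < ∫ x, (p n).eval x * (p n).eval x ∂μ := by
      have := integral_poly_pos μ hsupp hmom (p n * p n) (mul_ne_zero (hp0 n) (hp0 n))
        (fun x => by simp [mul_self_nonneg])
      simpa using this
    have hint1 : Integrable (fun x => (p n).eval x * (p n).eval x) μ := by
      simpa using integrable_poly μ hmom (p n * p n)
    have hint2 : Integrable (fun x => (p n).eval x * r.eval x) μ := by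
      simpa using integrable_poly μ hmom (p n * r)
    have hcontr : (0:ℝ) = c * ∫ x, (p n).eval x * (p n).eval x ∂μ := by
      calc (0:ℝ) = ∫ x, (p n).eval x * k.eval x ∂μ := hink.symm
        _ = ∫ x, (c * ((p n).eval x * (p n).eval x) + (p n).eval x * r.eval x) ∂μ := by
            congr 1; funext x
            have hke : k = C c * p n + r := by rw [hr]; ring
            rw [hke]; simp; ring
        _ = c * ∫ x, (p n).eval x * (p n).eval x ∂μ + ∫ x, (p n).eval x * r.eval x ∂μ := by
            rw [integral_add (hint1.const_mul c) hint2, MeasureTheory.integral_const_mul]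
        _ = c * ∫ x, (p n).eval x * (p n).eval x ∂μ := by rw [hir]; ring
    exact absurd hcontr.symm (mul_ne_zero hcne hsq.ne')
  · set g : Polynomial ℝ := C a * p n - C b * p (n+1) with hg
    have hgne : g ≠ 0 := by
      intro h0
      have heq : C a * p n = C b * p (n+1) := by
        have := sub_eq_zero.mp (hg ▸ h0)
        linear_combination this
      by_cases hA : a = 0
      · have hB : b ≠ 0 := fun hB => hab ⟨hA, hB⟩
        have : C b * p (n+1) = 0 := by rw [← heq, hA]; simp
        exact hp0 (n+1) ((mul_eq_zero.mp this).resolve_left (by simpa using hB))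
      · by_cases hB : b = 0
        · have : C a * p n = 0 := by rw [heq, hB]; simp
          exact hp0 n ((mul_eq_zero.mp this).resolve_left (by simpa using hA))
        · have d1 : (C a * p n).degree = (n : ℕ) := by rw [degree_C_mul hA, hdeg n]
          have d2 : (C b * p (n+1)).degree = ((n+1 : ℕ) : WithBot ℕ) := by
            rw [degree_C_mul hB, hdeg (n+1)]
          rw [heq, d2] at d1
          exact absurd d1 (by exact_mod_cast Nat.succ_ne_self n)
    have hroot : g.IsRoot x0 := by simp [hg, IsRoot, ← ha, ← hb]; ring
    have hroot' : (derivative g).IsRoot x0 := by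
      simp only [hg, derivative_sub, derivative_C_mul, IsRoot, eval_sub, eval_mul, eval_C]
      linear_combination -hW
    have hdvd : (X - C x0) ^ 2 ∣ g := by
      have h2 : 2 ≤ g.rootMultiplicity x0 :=
        (one_lt_rootMultiplicity_iff_isRoot hgne).mpr ⟨hroot, hroot'⟩
      exact dvd_trans (pow_dvd_pow _ h2) (g.pow_rootMultiplicity_dvd x0)
    obtain ⟨h, hh⟩ := hdvd
    have hhne : h ≠ 0 := fun h0 => hgne (by rw [hh, h0, mul_zero])
    have hdh : h.degree < (n : ℕ) := by
      have hdg : g.degree ≤ ((n+1 : ℕ) : WithBot ℕ) := by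
        refine (degree_sub_le _ _).trans (max_le ?_ ?_)
        · refine (degree_mul_le _ _).trans ?_
          rw [hdeg n]
          calc degree (C a) + (n : WithBot ℕ) ≤ 0 + (n : WithBot ℕ) := by
                gcongr; exact degree_C_le
            _ = (n : WithBot ℕ) := by rw [zero_add]
            _ ≤ ((n+1 : ℕ) : WithBot ℕ) := by exact_mod_cast Nat.le_succ n
        · refine (degree_mul_le _ _).trans ?_
          rw [hdeg (n+1)]
          calc degree (C b) + ((n+1:ℕ) : WithBot ℕ) ≤ 0 + ((n+1:ℕ) : WithBot ℕ) := by
                gcongr; exact degree_C_le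
            _ = ((n+1:ℕ) : WithBot ℕ) := by rw [zero_add]
      have hng : g.natDegree ≤ n + 1 := natDegree_le_iff_degree_le.mpr hdg
      have heq2 : g.natDegree = 2 + h.natDegree := by
        rw [hh, natDegree_mul (pow_ne_zero 2 (X_sub_C_ne_zero x0)) hhne,
          natDegree_pow, natDegree_X_sub_C]
      rw [degree_eq_natDegree hhne]
      exact_mod_cast by omega
    have hig1 : ∫ x, (p n).eval x * h.eval x ∂μ = 0 := orth_low μ hmom p hdeg horth n h hdh
    have hig2 : ∫ x, (p (n+1)).eval x * h.eval x ∂μ = 0 := by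
      refine orth_low μ hmom p hdeg horth (n+1) h (hdh.trans ?_)
      exact_mod_cast Nat.lt_succ_self n
    have hint1 : Integrable (fun x => (p n).eval x * h.eval x) μ := by
      simpa using integrable_poly μ hmom (p n * h)
    have hint2 : Integrable (fun x => (p (n+1)).eval x * h.eval x) μ := by
      simpa using integrable_poly μ hmom (p (n+1) * h)
    have hzero : ∫ x, (g * h).eval x ∂μ = 0 := by
      calc ∫ x, (g * h).eval x ∂μ
          = ∫ x, (a * ((p n).eval x * h.eval x) - b * ((p (n+1)).eval x * h.eval x)) ∂μ := by
            congr 1; funext x; rw [hg]; simp; ring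
        _ = a * ∫ x, (p n).eval x * h.eval x ∂μ - b * ∫ x, (p (n+1)).eval x * h.eval x ∂μ := by
            rw [integral_sub (hint1.const_mul a) (hint2.const_mul b),
              MeasureTheory.integral_const_mul, MeasureTheory.integral_const_mul]
        _ = 0 := by rw [hig1, hig2]; ring
    have hpos : 0 < ∫ x, (g * h).eval x ∂μ := by
      refine integral_poly_pos μ hsupp hmom (g * h) (mul_ne_zero hgne hhne) (fun x => ?_)
      rw [hh]
      have hsqe : ((X - C x0) ^ 2 * h * h).eval x = ((x - x0) * h.eval x) ^ 2 := by
        simp; ring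
      rw [hsqe]
      positivity
    exact absurd hzero hpos.ne'

end Aux

lemma deriv_nonneg_left (P : Polynomial ℝ) (y z : ℝ) (hyz : y < z)
    (hy : P.eval y = 0) (hpos : ∀ t ∈ Set.Ioo y z, 0 < P.eval t) :
    0 ≤ (derivative P).eval y := by
  have hD : HasDerivAt (fun x => P.eval x) ((derivative P).eval y) y := P.hasDerivAt y
  have hT : Filter.Tendsto (slope (fun x => P.eval x) y) (nhdsWithin y {y}ᶜ)
      (nhds ((derivative P).eval y)) := hasDerivAt_iff_tendsto_slope.mp hD
  have hle : nhdsWithin y (Set.Ioo y z) ≤ nhdsWithin y {y}ᶜ :=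
    nhdsWithin_mono y (fun t ht => ne_of_gt ht.1)
  have hne : (nhdsWithin y (Set.Ioo y z)).NeBot := by
    rw [← mem_closure_iff_nhdsWithin_neBot, closure_Ioo hyz.ne]
    exact Set.left_mem_Icc.mpr hyz.le
  refine ge_of_tendsto (hT.mono_left hle) ?_
  filter_upwards [self_mem_nhdsWithin] with t ht
  rw [slope_def_field, hy, sub_zero]
  have h1 : 0 < P.eval t := hpos t ht
  have h2 : 0 < t - y := sub_pos.mpr ht.1
  positivity

lemma deriv_nonpos_right (P : Polynomial ℝ) (y z : ℝ) (hyz : y < z)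
    (hz : P.eval z = 0) (hpos : ∀ t ∈ Set.Ioo y z, 0 < P.eval t) :
    (derivative P).eval z ≤ 0 := by
  have hD : HasDerivAt (fun x => P.eval x) ((derivative P).eval z) z := P.hasDerivAt z
  have hT : Filter.Tendsto (slope (fun x => P.eval x) z) (nhdsWithin z {z}ᶜ)
      (nhds ((derivative P).eval z)) := hasDerivAt_iff_tendsto_slope.mp hD
  have hle : nhdsWithin z (Set.Ioo y z) ≤ nhdsWithin z {z}ᶜ :=
    nhdsWithin_mono z (fun t ht => ne_of_lt ht.2)
  have hne : (nhdsWithin z (Set.Ioo y z)).NeBot := by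
    rw [← mem_closure_iff_nhdsWithin_neBot, closure_Ioo hyz.ne]
    exact Set.right_mem_Icc.mpr hyz.le
  refine le_of_tendsto (hT.mono_left hle) ?_
  filter_upwards [self_mem_nhdsWithin] with t ht
  rw [slope_def_field, hz, sub_zero]
  have h1 : 0 < P.eval t := hpos t ht
  have h2 : t - z < 0 := sub_neg.mpr ht.2
  exact le_of_lt (div_neg_of_pos_of_neg h1 h2)

lemma sign_const_on_Ioo (f : ℝ → ℝ) (hf : Continuous f) (y z t0 : ℝ)
    (hne : ∀ t ∈ Set.Ioo y z, f t ≠ 0) (ht0 : t0 ∈ Set.Ioo y z) (h0 : 0 < f t0) :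
    ∀ t ∈ Set.Ioo y z, 0 < f t := by
  intro t ht
  rcases lt_trichotomy (f t) 0 with hft | hft | hft
  · rcases lt_trichotomy t t0 with h | h | h
    · have : (0:ℝ) ∈ Set.Ioo (f t) (f t0) := ⟨hft, h0⟩
      obtain ⟨s, hs, hfs⟩ := intermediate_value_Ioo h.le hf.continuousOn this
      exact absurd hfs (hne s ⟨ht.1.trans hs.1, hs.2.trans ht0.2⟩)
    · rw [h] at hft; linarith
    · have : (0:ℝ) ∈ Set.Ioo (f t) (f t0) := ⟨hft, h0⟩
      obtain ⟨s, hs, hfs⟩ := intermediate_value_Ioo' h.le hf.continuousOn this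
      exact absurd hfs (hne s ⟨ht0.1.trans hs.1, hs.2.trans ht.2⟩)
  · exact absurd hft (hne t ht)
  · exact hft

/-- The zeros of consecutive orthogonal polynomials alternate: between two
consecutive real zeros of `p_{n+1}` there lies a zero of `pₙ`. -/
theorem orthogonal_polynomial_zeros_alternate
    (μ : Measure ℝ)
    (hsupp : (measureSupport μ).Infinite)
    (hmom : ∀ n : ℕ, Integrable (fun x : ℝ => |x| ^ n) μ)
    (p : ℕ → Polynomial ℝ)
    (hdeg : ∀ n : ℕ, (p n).degree = n)
    (horth : ∀ m n : ℕ, m ≠ n → ∫ x, (p m).eval x * (p n).eval x ∂μ = 0) :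
    ∀ (n : ℕ) (y z : ℝ), y < z →
      (p (n + 1)).eval y = 0 → (p (n + 1)).eval z = 0 →
      (∀ t : ℝ, y < t → t < z → (p (n + 1)).eval t ≠ 0) →
      ∃ t : ℝ, y < t ∧ t < z ∧ (p n).eval t = 0 := by
  intro n y z hyz hy hz hnz
  have hW : ∀ x : ℝ, (derivative (p (n+1))).eval x * (p n).eval x
      - (derivative (p n)).eval x * (p (n+1)).eval x ≠ 0 :=
    fun x => wronskian_ne_zero μ hmom p hdeg horth hsupp n x
  set Wp : Polynomial ℝ := derivative (p (n+1)) * p n - derivative (p n) * p (n+1) with hWp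
  have hWe : ∀ x : ℝ, Wp.eval x = (derivative (p (n+1))).eval x * (p n).eval x
      - (derivative (p n)).eval x * (p (n+1)).eval x := by intro x; simp [hWp]
  set dy : ℝ := (derivative (p (n+1))).eval y with hdy
  set dz : ℝ := (derivative (p (n+1))).eval z with hdz
  set qy : ℝ := (p n).eval y with hqy
  set qz : ℝ := (p n).eval z with hqz
  have hWy : Wp.eval y = dy * qy := by rw [hWe, hy]; ring
  have hWz : Wp.eval z = dz * qz := by rw [hWe, hz]; ring
  -- W has constant sign
  have hWprod : 0 < Wp.eval y * Wp.eval z := by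
    rcases lt_trichotomy (Wp.eval y * Wp.eval z) 0 with hlt | heq | hgt
    · exfalso
      rcases mul_neg_iff.mp hlt with ⟨h1, h2⟩ | ⟨h1, h2⟩
      · obtain ⟨s, _, hfs⟩ := intermediate_value_Ioo' hyz.le Wp.continuous_aeval.continuousOn
          (⟨h2, h1⟩ : (0:ℝ) ∈ Set.Ioo (Wp.eval z) (Wp.eval y))
        exact hW s (by rw [← hWe]; exact hfs)
      · obtain ⟨s, _, hfs⟩ := intermediate_value_Ioo hyz.le Wp.continuous_aeval.continuousOn
          (⟨h1, h2⟩ : (0:ℝ) ∈ Set.Ioo (Wp.eval y) (Wp.eval z))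
        exact hW s (by rw [← hWe]; exact hfs)
    · exfalso
      rcases mul_eq_zero.mp heq with h | h
      · exact hW y (by rw [← hWe]; exact h)
      · exact hW z (by rw [← hWe]; exact h)
    · exact hgt
  -- p (n+1) has constant sign on Ioo y z; derive dy * dz < 0
  have hdyne : dy ≠ 0 := by
    intro h0; apply hW y; rw [← hWe, hWy, h0, zero_mul]
  have hdzne : dz ≠ 0 := by
    intro h0; apply hW z; rw [← hWe, hWz, h0, zero_mul]
  have ht0 : (y + z) / 2 ∈ Set.Ioo y z := ⟨by linarith, by linarith⟩
  have hne' : ∀ t ∈ Set.Ioo y z, (p (n+1)).eval t ≠ 0 := fun t ht => hnz t ht.1 ht.2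
  have hdydz : dy * dz < 0 := by
    rcases lt_trichotomy ((p (n+1)).eval ((y + z) / 2)) 0 with hmid | hmid | hmid
    · -- negative on Ioo: use -(p (n+1))
      have hposn : ∀ t ∈ Set.Ioo y z, 0 < (-(p (n+1))).eval t := by
        have := sign_const_on_Ioo (fun x => (-(p (n+1))).eval x)
          (-(p (n+1))).continuous_aeval y z ((y + z) / 2)
          (fun t ht => by simpa using hne' t ht) ht0 (by simpa using hmid)
        exact this
      have h1 : 0 ≤ (derivative (-(p (n+1)))).eval y :=
        deriv_nonneg_left _ y z hyz (by simpa using hy) hposn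
      have h2 : (derivative (-(p (n+1)))).eval z ≤ 0 :=
        deriv_nonpos_right _ y z hyz (by simpa using hz) hposn
      simp only [derivative_neg, eval_neg] at h1 h2
      have hy' : dy < 0 := lt_of_le_of_ne (by linarith) hdyne
      have hz' : 0 < dz := lt_of_le_of_ne (by linarith) (Ne.symm hdzne)
      exact mul_neg_of_neg_of_pos hy' hz'
    · exact absurd hmid (hne' _ ht0)
    · have hposn : ∀ t ∈ Set.Ioo y z, 0 < (p (n+1)).eval t :=
        sign_const_on_Ioo (fun x => (p (n+1)).eval x) (p (n+1)).continuous_aeval y z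
          ((y + z) / 2) hne' ht0 hmid
      have h1 : 0 ≤ dy := deriv_nonneg_left _ y z hyz hy hposn
      have h2 : dz ≤ 0 := deriv_nonpos_right _ y z hyz hz hposn
      have hy' : 0 < dy := lt_of_le_of_ne h1 (Ne.symm hdyne)
      have hz' : dz < 0 := lt_of_le_of_ne h2 hdzne
      exact mul_neg_of_pos_of_neg hy' hz'
  -- q y * q z < 0
  have hq : qy * qz < 0 := by
    rw [hWy, hWz] at hWprod
    by_contra hcon
    push_neg at hcon
    nlinarith
  rcases mul_neg_iff.mp hq with ⟨h1, h2⟩ | ⟨h1, h2⟩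
  · obtain ⟨s, hs, hfs⟩ := intermediate_value_Ioo' hyz.le (p n).continuous_aeval.continuousOn
      (⟨h2, h1⟩ : (0:ℝ) ∈ Set.Ioo qz qy)
    exact ⟨s, hs.1, hs.2, hfs⟩
  · obtain ⟨s, hs, hfs⟩ := intermediate_value_Ioo hyz.le (p n).continuous_aeval.continuousOn
      (⟨h1, h2⟩ : (0:ℝ) ∈ Set.Ioo qy qz)
    exact ⟨s, hs.1, hs.2, hfs⟩
end

section
/- (Kernel polynomials) Let μ be a positive Borel measure on ℝ with infinite support and all moments finite whose support is contained in (−∞, b], let (p_n)_{n≥0} be a system of orthogonal polynomials with respect to μ, h_n := ∫ p_n(x)^2 dμ(x), and fix y ≥ b. Define q_n(x) := ∑_{j=0}^{n} p_j(x) p_j(y) / h_j. Then q_n is a polynomial of degree n and ∫ q_n(x) · x^k · (y − x) dμ(x) = 0 for all k < n; consequently the q_n form a system of orthogonal polynomials with respect to the measure (y − x) dμ(x). -/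
open MeasureTheory Polynomial

lemma kp_poly_integrable (μ : Measure ℝ)
    (hmom : ∀ n : ℕ, Integrable (fun x : ℝ => |x| ^ n) μ) (P : Polynomial ℝ) :
    Integrable (fun x => P.eval x) μ := by
  have hpow : ∀ i : ℕ, Integrable (fun x : ℝ => x ^ i) μ := by
    intro i
    refine (hmom i).mono' (continuous_pow i).aestronglyMeasurable ?_
    filter_upwards with x
    rw [Real.norm_eq_abs, abs_pow]
  have : (fun x => P.eval x) =
      fun x => ∑ i ∈ Finset.range (P.natDegree + 1), P.coeff i * x ^ i := by
    funext x; exact P.eval_eq_sum_range x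
  rw [this]
  exact integrable_finset_sum _ fun i _ => (hpow i).const_mul _

lemma kp_ae_mem_support (μ : Measure ℝ) : ∀ᵐ x ∂μ, x ∈ measureSupport μ := by
  have : μ (measureSupport μ)ᶜ = 0 := by
    apply measure_null_of_locally_null
    intro x hx
    simp only [measureSupport, Set.mem_compl_iff, Set.mem_setOf_eq, not_forall] at hx
    obtain ⟨U, hU, hU0⟩ := hx
    exact ⟨U, nhdsWithin_le_nhds hU, by simpa using hU0⟩
  exact this

lemma kp_not_ae_zero (μ : Measure ℝ) (hsupp_inf : (measureSupport μ).Infinite)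
    (r : Polynomial ℝ) (hr : r ≠ 0) :
    ¬ ((fun x => r.eval x) =ᵐ[μ] (0 : ℝ → ℝ)) := by
  intro h
  have hF : {x : ℝ | r.IsRoot x}.Finite := Polynomial.finite_setOf_isRoot hr
  apply hsupp_inf
  apply Set.Finite.subset hF
  intro z hz
  by_contra hzF
  have hopen : IsOpen {x : ℝ | r.IsRoot x}ᶜ := hF.isClosed.isOpen_compl
  have hnhds : {x : ℝ | r.IsRoot x}ᶜ ∈ nhds z := hopen.mem_nhds hzF
  have h0 : μ {x : ℝ | r.IsRoot x}ᶜ = 0 := by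
    rw [Filter.EventuallyEq, ae_iff] at h
    simpa [Polynomial.IsRoot, Set.compl_setOf] using h
  exact absurd (hz _ hnhds) (by rw [h0]; simp)

lemma kp_pne (p : ℕ → Polynomial ℝ) (hdeg : ∀ n : ℕ, (p n).degree = n) (n : ℕ) :
    p n ≠ 0 := by
  intro h'
  have h := hdeg n
  rw [h', Polynomial.degree_zero] at h
  exact (by simpa using h.symm)

lemma kp_span (p : ℕ → Polynomial ℝ) (hdeg : ∀ n : ℕ, (p n).degree = n) :
    ∀ n : ℕ, ∀ s : Polynomial ℝ, s.degree < (n + 1 : ℕ) →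
      ∃ c : ℕ → ℝ, s = ∑ j ∈ Finset.range (n + 1), Polynomial.C (c j) * p j := by
  intro n
  induction n with
  | zero =>
    intro s hs
    have hp0 : p 0 = Polynomial.C ((p 0).coeff 0) :=
      Polynomial.eq_C_of_degree_le_zero (le_of_eq (hdeg 0))
    have hne : p 0 ≠ 0 := kp_pne p hdeg 0
    have h0 : (p 0).coeff 0 ≠ 0 := fun h => hne (by rw [hp0, h, map_zero])
    have hsC : s = Polynomial.C (s.coeff 0) := by
      apply Polynomial.eq_C_of_degree_le_zero
      exact Order.lt_succ_iff.mp (by exact_mod_cast hs)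
    refine ⟨fun _ => s.coeff 0 / (p 0).coeff 0, ?_⟩
    rw [Finset.sum_range_one]
    calc s = Polynomial.C (s.coeff 0 / (p 0).coeff 0) * Polynomial.C ((p 0).coeff 0) := by
            rw [← Polynomial.C_mul, div_mul_cancel₀ _ h0, ← hsC]
      _ = _ := by rw [← hp0]
  | succ m ih =>
    intro s hs
    set a : ℝ := s.coeff (m + 1) / (p (m + 1)).coeff (m + 1) with ha
    have hnd : (p (m+1)).natDegree = m + 1 :=
      Polynomial.natDegree_eq_of_degree_eq_some (hdeg (m+1))
    have hlc : (p (m + 1)).coeff (m + 1) ≠ 0 := by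
      have hcl : (p (m+1)).coeff (m+1) = (p (m+1)).leadingCoeff := by
        rw [Polynomial.leadingCoeff, hnd]
      rw [hcl]
      exact Polynomial.leadingCoeff_ne_zero.mpr (kp_pne p hdeg (m+1))
    set t : Polynomial ℝ := s - Polynomial.C a * p (m + 1) with ht
    have htd : t.degree < (m + 1 : ℕ) := by
      rw [Polynomial.degree_lt_iff_coeff_zero]
      intro k hk
      rcases eq_or_lt_of_le hk with hk' | hk'
      · rw [ht]
        simp only [Polynomial.coeff_sub, Polynomial.coeff_C_mul, ← hk']
        rw [ha, div_mul_cancel₀ _ hlc, sub_self]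
      · have hk2 : ((m + 1 + 1 : ℕ) : WithBot ℕ) ≤ (k : WithBot ℕ) := by exact_mod_cast hk'
        have h1 : s.coeff k = 0 := by
          apply Polynomial.coeff_eq_zero_of_degree_lt
          exact lt_of_lt_of_le hs hk2
        have h2 : (p (m+1)).coeff k = 0 := by
          apply Polynomial.coeff_eq_zero_of_degree_lt
          rw [hdeg (m+1)]
          exact_mod_cast hk'
        simp [ht, h1, h2]
    obtain ⟨c, hc⟩ := ih t htd
    refine ⟨Function.update c (m + 1) a, ?_⟩
    rw [Finset.sum_range_succ]
    have hupd : ∀ j ∈ Finset.range (m + 1),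
        Polynomial.C (Function.update c (m + 1) a j) * p j = Polynomial.C (c j) * p j := by
      intro j hj
      have hjne : j ≠ m + 1 := by have := Finset.mem_range.mp hj; omega
      rw [Function.update_of_ne hjne]
    rw [Finset.sum_congr rfl hupd, ← hc, Function.update_self, ht]
    ring

lemma kp_int2 (μ : Measure ℝ) (hmom : ∀ n : ℕ, Integrable (fun x : ℝ => |x| ^ n) μ)
    (P Q : Polynomial ℝ) : Integrable (fun x => P.eval x * Q.eval x) μ := by
  simpa [Polynomial.eval_mul] using kp_poly_integrable μ hmom (P * Q)

lemma kp_orth_lower (μ : Measure ℝ)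
    (hmom : ∀ n : ℕ, Integrable (fun x : ℝ => |x| ^ n) μ)
    (p : ℕ → Polynomial ℝ) (hdeg : ∀ n : ℕ, (p n).degree = n)
    (horth : ∀ m n : ℕ, m ≠ n → ∫ x, (p m).eval x * (p n).eval x ∂μ = 0)
    (n : ℕ) (s : Polynomial ℝ) (hs : s.degree < (n : ℕ)) :
    ∫ x, (p n).eval x * s.eval x ∂μ = 0 := by
  cases n with
  | zero =>
    have : s = 0 := by
      ext m
      exact (Polynomial.degree_lt_iff_coeff_zero s 0).mp (by exact_mod_cast hs) m (Nat.zero_le m)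
    simp [this]
  | succ m =>
    obtain ⟨c, hc⟩ := kp_span p hdeg m s hs
    have heq : ∀ x : ℝ, (p (m+1)).eval x * s.eval x =
        ∑ j ∈ Finset.range (m+1), c j * ((p (m+1)).eval x * (p j).eval x) := by
      intro x
      rw [hc]
      simp only [Polynomial.eval_finset_sum, Polynomial.eval_mul, Polynomial.eval_C,
        Finset.mul_sum]
      exact Finset.sum_congr rfl fun j _ => by ring
    simp_rw [heq]
    rw [MeasureTheory.integral_finset_sum _
      (fun j _ => (kp_int2 μ hmom (p (m+1)) (p j)).const_mul _)]
    refine Finset.sum_eq_zero fun j hj => ?_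
    rw [integral_const_mul, horth (m+1) j (by
      have := Finset.mem_range.mp hj; omega), mul_zero]

lemma kp_hpos (μ : Measure ℝ) (hsupp_inf : (measureSupport μ).Infinite)
    (hmom : ∀ n : ℕ, Integrable (fun x : ℝ => |x| ^ n) μ)
    (p : ℕ → Polynomial ℝ) (hdeg : ∀ n : ℕ, (p n).degree = n) (n : ℕ) :
    0 < ∫ x, (p n).eval x ^ 2 ∂μ := by
  have hint : Integrable (fun x => (p n).eval x ^ 2) μ := by
    have h := kp_poly_integrable μ hmom (p n ^ 2)
    simp only [Polynomial.eval_pow] at h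
    exact h
  have hnn : 0 ≤ ∫ x, (p n).eval x ^ 2 ∂μ :=
    MeasureTheory.integral_nonneg fun x => sq_nonneg _
  rcases eq_or_lt_of_le hnn with h | h
  · exfalso
    have h0 : (fun x => (p n).eval x ^ 2) =ᵐ[μ] 0 :=
      (MeasureTheory.integral_eq_zero_iff_of_nonneg (fun x => sq_nonneg _) hint).mp h.symm
    apply kp_not_ae_zero μ hsupp_inf (p n) (kp_pne p hdeg n)
    filter_upwards [h0] with x hx
    exact pow_eq_zero_iff (n := 2) (by norm_num) |>.mp hx
  · exact h

lemma kp_py_ne (μ : Measure ℝ) (hsupp_inf : (measureSupport μ).Infinite)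
    (hmom : ∀ n : ℕ, Integrable (fun x : ℝ => |x| ^ n) μ)
    (b : ℝ) (hsupp : measureSupport μ ⊆ Set.Iic b) (y : ℝ) (hy : b ≤ y)
    (p : ℕ → Polynomial ℝ) (hdeg : ∀ n : ℕ, (p n).degree = n)
    (horth : ∀ m n : ℕ, m ≠ n → ∫ x, (p m).eval x * (p n).eval x ∂μ = 0)
    (n : ℕ) : (p n).eval y ≠ 0 := by
  cases n with
  | zero =>
    have hp0 : p 0 = Polynomial.C ((p 0).coeff 0) :=
      Polynomial.eq_C_of_degree_le_zero (le_of_eq (hdeg 0))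
    have h0 : (p 0).coeff 0 ≠ 0 := fun h => kp_pne p hdeg 0 (by rw [hp0, h, map_zero])
    rw [hp0]; simpa using h0
  | succ m =>
    intro hroot
    obtain ⟨r, hr⟩ := (Polynomial.dvd_iff_isRoot.mpr hroot : (X - Polynomial.C y) ∣ p (m+1))
    have hrne : r ≠ 0 := by
      intro h
      exact kp_pne p hdeg (m+1) (by rw [hr, h, mul_zero])
    have hXy : (X - Polynomial.C y : Polynomial ℝ) ≠ 0 := Polynomial.X_sub_C_ne_zero y
    have hnd : (p (m+1)).natDegree = m + 1 :=
      Polynomial.natDegree_eq_of_degree_eq_some (hdeg (m+1))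
    have hrd : r.degree < ((m + 1 : ℕ) : WithBot ℕ) := by
      have h1 : (p (m+1)).natDegree = 1 + r.natDegree := by
        rw [hr, Polynomial.natDegree_mul hXy hrne, Polynomial.natDegree_X_sub_C]
      have h2 : r.natDegree = m := by omega
      calc r.degree ≤ (r.natDegree : WithBot ℕ) := Polynomial.degree_le_natDegree
        _ < ((m + 1 : ℕ) : WithBot ℕ) := by rw [h2]; exact_mod_cast Nat.lt_succ_self m
    have h0 : ∫ x, (p (m+1)).eval x * r.eval x ∂μ = 0 :=
      kp_orth_lower μ hmom p hdeg horth (m+1) r hrd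
    set f : ℝ → ℝ := fun x => (y - x) * r.eval x ^ 2 with hf
    have hfint : Integrable f μ := by
      have h := kp_poly_integrable μ hmom ((Polynomial.C y - X) * r ^ 2)
      simp only [Polynomial.eval_mul, Polynomial.eval_sub, Polynomial.eval_C,
        Polynomial.eval_X, Polynomial.eval_pow] at h
      exact h
    have hfval : ∀ x : ℝ, f x = -((p (m+1)).eval x * r.eval x) := by
      intro x
      rw [hf, hr]
      simp only [Polynomial.eval_mul, Polynomial.eval_sub, Polynomial.eval_X, Polynomial.eval_C]
      ring
    have hfi : ∫ x, f x ∂μ = 0 := by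
      simp_rw [hfval]
      rw [MeasureTheory.integral_neg, h0, neg_zero]
    have hfnn : 0 ≤ᵐ[μ] f := by
      filter_upwards [kp_ae_mem_support μ] with x hx
      have hxb : x ≤ b := hsupp hx
      have : 0 ≤ y - x := by linarith
      exact mul_nonneg this (sq_nonneg _)
    have hf0 : f =ᵐ[μ] 0 :=
      (MeasureTheory.integral_eq_zero_iff_of_nonneg_ae hfnn hfint).mp hfi
    apply kp_not_ae_zero μ hsupp_inf (p (m+1) * r) (mul_ne_zero (kp_pne p hdeg (m+1)) hrne)
    filter_upwards [hf0] with x hx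
    have : (p (m+1) * r).eval x = -f x := by
      rw [Polynomial.eval_mul, hfval x, neg_neg]
    simp only [this, hx]
    simp

lemma kp_repro (μ : Measure ℝ) (hsupp_inf : (measureSupport μ).Infinite)
    (hmom : ∀ n : ℕ, Integrable (fun x : ℝ => |x| ^ n) μ)
    (p : ℕ → Polynomial ℝ) (hdeg : ∀ n : ℕ, (p n).degree = n)
    (horth : ∀ m n : ℕ, m ≠ n → ∫ x, (p m).eval x * (p n).eval x ∂μ = 0)
    (y : ℝ) (n : ℕ) (s : Polynomial ℝ) (hs : s.degree < ((n + 1 : ℕ) : WithBot ℕ)) :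
    ∫ x, (∑ j ∈ Finset.range (n + 1),
        (p j).eval x * (p j).eval y / (∫ t, (p j).eval t ^ 2 ∂μ)) * s.eval x ∂μ
      = s.eval y := by
  set H : ℕ → ℝ := fun j => ∫ t, (p j).eval t ^ 2 ∂μ with hH
  have hHne : ∀ j, H j ≠ 0 := fun j => (kp_hpos μ hsupp_inf hmom p hdeg j).ne'
  obtain ⟨c, hc⟩ := kp_span p hdeg n s hs
  have heq : ∀ x : ℝ,
      (∑ j ∈ Finset.range (n + 1), (p j).eval x * (p j).eval y / H j) * s.eval x =
      ∑ j ∈ Finset.range (n + 1), ((p j).eval y / H j) * ((p j).eval x * s.eval x) := by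
    intro x
    rw [Finset.sum_mul]
    exact Finset.sum_congr rfl fun j _ => by ring
  change ∫ x, (∑ j ∈ Finset.range (n + 1), (p j).eval x * (p j).eval y / H j) * s.eval x ∂μ = s.eval y
  simp_rw [heq]
  rw [MeasureTheory.integral_finset_sum _
    (fun j _ => (kp_int2 μ hmom (p j) s).const_mul _)]
  have hjint : ∀ j ∈ Finset.range (n + 1),
      ∫ x, (p j).eval x * s.eval x ∂μ = c j * H j := by
    intro j hj
    have heq2 : ∀ x : ℝ, (p j).eval x * s.eval x =
        ∑ i ∈ Finset.range (n + 1), c i * ((p j).eval x * (p i).eval x) := by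
      intro x
      rw [hc]
      simp only [Polynomial.eval_finset_sum, Polynomial.eval_mul, Polynomial.eval_C,
        Finset.mul_sum]
      exact Finset.sum_congr rfl fun i _ => by ring
    simp_rw [heq2]
    rw [MeasureTheory.integral_finset_sum _
      (fun i _ => (kp_int2 μ hmom (p j) (p i)).const_mul _)]
    rw [Finset.sum_eq_single j]
    · rw [integral_const_mul]
      congr 1
      rw [hH]
      simp_rw [sq]
    · intro i _ hij
      rw [integral_const_mul, horth j i (Ne.symm hij), mul_zero]
    · intro h; exact absurd hj h
  rw [Finset.sum_congr rfl (fun j hj => by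
    rw [integral_const_mul, hjint j hj])]
  have : ∀ j ∈ Finset.range (n + 1),
      (p j).eval y / H j * (c j * H j) = c j * (p j).eval y := by
    intro j _
    rw [mul_comm (c j) (H j), ← mul_assoc, div_mul_cancel₀ _ (hHne j)]
    ring
  rw [Finset.sum_congr rfl this, hc]
  simp only [Polynomial.eval_finset_sum, Polynomial.eval_mul, Polynomial.eval_C]

/-- **Kernel polynomials.** If `μ` is supported in `(−∞, b]` and `y ≥ b`, then
`qₙ(x) := ∑_{j=0}^{n} pⱼ(x)pⱼ(y)/hⱼ` is a polynomial of degree `n` satisfying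
`∫ qₙ(x) xᵏ (y−x) dμ(x) = 0` for `k < n`; consequently the `qₙ` are orthogonal
polynomials with respect to the measure `(y−x) dμ(x)`. -/
theorem kernel_polynomials
    (μ : Measure ℝ)
    (hsupp_inf : (measureSupport μ).Infinite)
    (hmom : ∀ n : ℕ, Integrable (fun x : ℝ => |x| ^ n) μ)
    (b : ℝ) (hsupp : measureSupport μ ⊆ Set.Iic b)
    (y : ℝ) (hy : b ≤ y)
    (p : ℕ → Polynomial ℝ)
    (hdeg : ∀ n : ℕ, (p n).degree = n)
    (horth : ∀ m n : ℕ, m ≠ n → ∫ x, (p m).eval x * (p n).eval x ∂μ = 0) :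
    ∃ q : ℕ → Polynomial ℝ,
      (∀ (n : ℕ) (x : ℝ), (q n).eval x =
        ∑ j ∈ Finset.range (n + 1),
          (p j).eval x * (p j).eval y / (∫ t, (p j).eval t ^ 2 ∂μ)) ∧
      (∀ n : ℕ, (q n).degree = n) ∧
      (∀ n k : ℕ, k < n → ∫ x, (q n).eval x * x ^ k * (y - x) ∂μ = 0) ∧
      (∀ m n : ℕ, m ≠ n → ∫ x, (q m).eval x * (q n).eval x * (y - x) ∂μ = 0) := by
  classical
  set H : ℕ → ℝ := fun j => ∫ t, (p j).eval t ^ 2 ∂μ with hH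
  have hHne : ∀ j, H j ≠ 0 := fun j => (kp_hpos μ hsupp_inf hmom p hdeg j).ne'
  have hpy : ∀ j, (p j).eval y ≠ 0 := kp_py_ne μ hsupp_inf hmom b hsupp y hy p hdeg horth
  set q : ℕ → Polynomial ℝ :=
    fun n => ∑ j ∈ Finset.range (n + 1), Polynomial.C ((p j).eval y / H j) * p j with hq
  have heval : ∀ (n : ℕ) (x : ℝ), (q n).eval x =
      ∑ j ∈ Finset.range (n + 1), (p j).eval x * (p j).eval y / H j := by
    intro n x
    rw [hq]
    simp only [Polynomial.eval_finset_sum, Polynomial.eval_mul, Polynomial.eval_C]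
    exact Finset.sum_congr rfl fun j _ => by ring
  have hqdeg : ∀ n : ℕ, (q n).degree = n := by
    intro n
    have hle : (q n).degree ≤ (n : WithBot ℕ) := by
      refine (Polynomial.degree_sum_le _ _).trans ?_
      rw [Finset.sup_le_iff]
      intro j hj
      refine (Polynomial.degree_mul_le _ _).trans ?_
      calc (Polynomial.C ((p j).eval y / H j)).degree + (p j).degree
          ≤ 0 + (j : WithBot ℕ) := add_le_add Polynomial.degree_C_le (le_of_eq (hdeg j))
        _ = (j : WithBot ℕ) := zero_add _
        _ ≤ (n : WithBot ℕ) := by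
            exact_mod_cast Nat.lt_succ_iff.mp (Finset.mem_range.mp hj)
    have hcoeff : (q n).coeff n ≠ 0 := by
      rw [hq, Polynomial.finset_sum_coeff]
      rw [Finset.sum_eq_single n]
      · rw [Polynomial.coeff_C_mul]
        have hnd : (p n).natDegree = n := Polynomial.natDegree_eq_of_degree_eq_some (hdeg n)
        have hcl : (p n).coeff n = (p n).leadingCoeff := by rw [Polynomial.leadingCoeff, hnd]
        rw [hcl]
        exact mul_ne_zero (div_ne_zero (hpy n) (hHne n))
          (Polynomial.leadingCoeff_ne_zero.mpr (kp_pne p hdeg n))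
      · intro i hi hin
        rw [Polynomial.coeff_C_mul, Polynomial.coeff_eq_zero_of_degree_lt, mul_zero]
        rw [hdeg i]
        exact_mod_cast lt_of_le_of_ne (Nat.lt_succ_iff.mp (Finset.mem_range.mp hi)) hin
      · intro h
        exact absurd (Finset.self_mem_range_succ n) h
    exact Polynomial.degree_eq_of_le_of_coeff_ne_zero hle hcoeff
  refine ⟨q, heval, hqdeg, ?_, ?_⟩
  · intro n k hk
    set s : Polynomial ℝ := X ^ k * (Polynomial.C y - X) with hs
    have hsd : s.degree < ((n + 1 : ℕ) : WithBot ℕ) := by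
      have h1 : (Polynomial.C y - X : Polynomial ℝ).degree = 1 := by
        rw [show (Polynomial.C y - X : Polynomial ℝ) = -(X - Polynomial.C y) by ring,
          Polynomial.degree_neg, Polynomial.degree_X_sub_C]
      calc s.degree ≤ (X ^ k : Polynomial ℝ).degree + (Polynomial.C y - X).degree :=
            Polynomial.degree_mul_le _ _
        _ = (k : WithBot ℕ) + 1 := by rw [Polynomial.degree_X_pow, h1]
        _ = ((k + 1 : ℕ) : WithBot ℕ) := by push_cast; ring
        _ < ((n + 1 : ℕ) : WithBot ℕ) := by exact_mod_cast Nat.succ_lt_succ hk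
    have hrw : (∫ x, (q n).eval x * x ^ k * (y - x) ∂μ) =
        ∫ x, (∑ j ∈ Finset.range (n + 1),
          (p j).eval x * (p j).eval y / H j) * s.eval x ∂μ := by
      congr 1
      funext x
      rw [← heval n x, hs]
      simp only [Polynomial.eval_mul, Polynomial.eval_pow, Polynomial.eval_X,
        Polynomial.eval_sub, Polynomial.eval_C]
      ring
    rw [hrw, kp_repro μ hsupp_inf hmom p hdeg horth y n s hsd, hs]
    simp
  · have key : ∀ m n : ℕ, m < n → ∫ x, (q m).eval x * (q n).eval x * (y - x) ∂μ = 0 := by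
      intro m n hmn
      set s : Polynomial ℝ := q m * (Polynomial.C y - X) with hs
      have hsd : s.degree < ((n + 1 : ℕ) : WithBot ℕ) := by
        have h1 : (Polynomial.C y - X : Polynomial ℝ).degree = 1 := by
          rw [show (Polynomial.C y - X : Polynomial ℝ) = -(X - Polynomial.C y) by ring,
            Polynomial.degree_neg, Polynomial.degree_X_sub_C]
        calc s.degree ≤ (q m).degree + (Polynomial.C y - X).degree :=
              Polynomial.degree_mul_le _ _
          _ = (m : WithBot ℕ) + 1 := by rw [hqdeg m, h1]
          _ = ((m + 1 : ℕ) : WithBot ℕ) := by push_cast; ring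
          _ < ((n + 1 : ℕ) : WithBot ℕ) := by exact_mod_cast Nat.succ_lt_succ hmn
      have hrw : (∫ x, (q m).eval x * (q n).eval x * (y - x) ∂μ) =
          ∫ x, (∑ j ∈ Finset.range (n + 1),
            (p j).eval x * (p j).eval y / H j) * s.eval x ∂μ := by
        congr 1
        funext x
        rw [← heval n x, hs]
        simp only [Polynomial.eval_mul, Polynomial.eval_sub, Polynomial.eval_C,
          Polynomial.eval_X]
        ring
      rw [hrw, kp_repro μ hsupp_inf hmom p hdeg horth y n s hsd, hs]
      simp
    intro m n hmn
    rcases lt_or_gt_of_ne hmn with h | h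
    · exact key m n h
    · have hcomm : ∀ x : ℝ, (q m).eval x * (q n).eval x * (y - x) =
          (q n).eval x * (q m).eval x * (y - x) := fun x => by ring
      simp_rw [hcomm]
      exact key n m h
end

section
/- (Electrostatic interpretation of zeros, Stieltjes) Let p, q > 0 and n ≥ 1, and let P be a monic real polynomial of degree n with n distinct zeros x_1 < … < x_n all lying in (−1,1), satisfying the differential equation (1 − x^2) P''(x) + 2(q − p − (p + q)x) P'(x) = −n(n + 2p + 2q − 1) P(x). Then for every k ∈ {1,…,n}: ∑_{j ≠ k} 1/(x_k − x_j) + p/(x_k − 1) + q/(x_k + 1) = 0. -/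
open Polynomial

lemma deriv_prod_X_sub_C {n : ℕ} (x : Fin n → ℝ) (s : Finset (Fin n)) :
    derivative (∏ j ∈ s, (X - C (x j))) =
      ∑ i ∈ s, ∏ j ∈ s.erase i, (X - C (x j)) := by
  classical
  induction s using Finset.induction_on with
  | empty => simp
  | insert a s hni ih =>
    rw [Finset.prod_insert hni, derivative_mul, ih, Finset.sum_insert hni,
      Finset.erase_insert hni]
    simp only [derivative_sub, derivative_X, derivative_C, sub_zero, one_mul]
    congr 1
    rw [Finset.mul_sum]
    refine Finset.sum_congr rfl fun i hi => ?_
    rw [Finset.erase_insert_of_ne (by rintro rfl; exact hni hi),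
      Finset.prod_insert (fun h => hni (Finset.mem_of_mem_erase h))]


/-- **Electrostatic interpretation of the zeros of Jacobi polynomials (Stieltjes).**
If `P` is a monic polynomial of degree `n ≥ 1` with distinct zeros
`x₁ < … < xₙ` in `(−1,1)` satisfying the Jacobi differential equation
`(1−x²)P'' + 2(q−p−(p+q)x)P' = −n(n+2p+2q−1)P` with `p, q > 0`, then for each `k`:
`∑_{j≠k} 1/(xₖ−xⱼ) + p/(xₖ−1) + q/(xₖ+1) = 0`. -/
theorem electrostatic_zeros_jacobi
    (p q : ℝ) (hp : 0 < p) (hq : 0 < q)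
    (n : ℕ) (hn : 1 ≤ n)
    (P : Polynomial ℝ) (hP_monic : P.Monic) (hP_deg : P.natDegree = n)
    (x : Fin n → ℝ) (hx_mono : StrictMono x)
    (hx_mem : ∀ k : Fin n, x k ∈ Set.Ioo (-1 : ℝ) 1)
    (hx_root : ∀ k : Fin n, P.eval (x k) = 0)
    (hODE : ∀ t : ℝ,
      (1 - t ^ 2) * (Polynomial.derivative (Polynomial.derivative P)).eval t +
        2 * (q - p - (p + q) * t) * (Polynomial.derivative P).eval t =
      -(n : ℝ) * ((n : ℝ) + 2 * p + 2 * q - 1) * P.eval t) :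
    ∀ k : Fin n,
      (∑ j ∈ Finset.univ.erase k, 1 / (x k - x j)) +
        p / (x k - 1) + q / (x k + 1) = 0 := by
  classical
  have hinj : Function.Injective x := hx_mono.injective
  -- P is the product of linear factors
  set Q : Polynomial ℝ := ∏ j : Fin n, (X - C (x j)) with hQdef
  have hQmonic : Q.Monic := monic_prod_of_monic _ _ fun j _ => monic_X_sub_C _
  have hQdeg : Q.natDegree = n := by
    rw [hQdef, natDegree_prod _ _ fun j _ => X_sub_C_ne_zero _]
    simp [natDegree_X_sub_C]
  have hdvd : Q ∣ P := by
    refine Finset.prod_dvd_of_coprime ?_ fun j _ => dvd_iff_isRoot.2 (hx_root j)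
    exact (pairwise_coprime_X_sub_C hinj).set_pairwise _
  have hPQ : P = Q :=
    eq_of_monic_of_dvd_of_natDegree_le hQmonic hP_monic hdvd (by rw [hP_deg, hQdeg])
  intro k
  set a := x k with ha
  have hane : ∀ j : Fin n, j ≠ k → a - x j ≠ 0 := fun j hj =>
    sub_ne_zero_of_ne (fun h => hj (hinj h.symm))
  -- first derivative at a
  have hA : (derivative P).eval a = ∏ l ∈ Finset.univ.erase k, (a - x l) := by
    rw [hPQ, hQdef, deriv_prod_X_sub_C, eval_finset_sum]
    rw [Finset.sum_eq_single k]
    · simp [eval_prod]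
    · intro i _ hik
      rw [eval_prod]
      refine Finset.prod_eq_zero (Finset.mem_erase.2 ⟨fun h => hik h.symm, Finset.mem_univ k⟩) ?_
      simp [ha]
    · simp
  have hAne : (derivative P).eval a ≠ 0 := by
    rw [hA]
    exact Finset.prod_ne_zero_iff.2 fun j hj => hane j (Finset.mem_erase.1 hj).1
  -- second derivative at a
  have hB : (derivative (derivative P)).eval a =
      2 * ∑ j ∈ Finset.univ.erase k, ∏ l ∈ (Finset.univ.erase k).erase j, (a - x l) := by
    rw [hPQ, hQdef, deriv_prod_X_sub_C, map_sum, eval_finset_sum]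
    have hsplit : ∀ i : Fin n,
        (derivative (∏ j ∈ Finset.univ.erase i, (X - C (x j)))).eval a =
          ∑ j ∈ Finset.univ.erase i, ∏ l ∈ (Finset.univ.erase i).erase j, (a - x l) := by
      intro i
      rw [deriv_prod_X_sub_C, eval_finset_sum]
      exact Finset.sum_congr rfl fun j _ => by rw [eval_prod]; simp
    simp only [hsplit]
    rw [← Finset.add_sum_erase _ _ (Finset.mem_univ k)]
    have hrest : ∑ i ∈ Finset.univ.erase k,
        (∑ j ∈ Finset.univ.erase i, ∏ l ∈ (Finset.univ.erase i).erase j, (a - x l)) =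
        ∑ i ∈ Finset.univ.erase k, ∏ l ∈ (Finset.univ.erase k).erase i, (a - x l) := by
      refine Finset.sum_congr rfl fun i hi => ?_
      obtain ⟨hik, -⟩ := Finset.mem_erase.1 hi
      rw [Finset.sum_eq_single k]
      · rw [Finset.erase_right_comm]
      · intro j hj hjk
        refine Finset.prod_eq_zero (Finset.mem_erase.2 ⟨fun h => hjk h.symm,
          Finset.mem_erase.2 ⟨fun h => hik h.symm, Finset.mem_univ k⟩⟩) ?_
        simp [ha]
      · intro h
        exact absurd (Finset.mem_erase.2 ⟨fun h' => hik h'.symm, Finset.mem_univ k⟩) h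
    rw [hrest]; ring
  -- relate B to S * A
  set S : ℝ := ∑ j ∈ Finset.univ.erase k, 1 / (a - x j) with hSdef
  have hSA : (derivative (derivative P)).eval a = 2 * S * (derivative P).eval a := by
    rw [hB, hA, hSdef, mul_assoc, Finset.sum_mul]
    congr 1
    refine Finset.sum_congr rfl fun j hj => ?_
    obtain ⟨hjk, -⟩ := Finset.mem_erase.1 hj
    rw [← Finset.mul_prod_erase _ _ hj]
    field_simp [hane j hjk]
  -- ODE at a
  have hODEa := hODE a
  rw [hx_root k] at hODEa
  rw [hSA] at hODEa
  simp only [mul_zero] at hODEa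
  have key : (1 - a ^ 2) * S + (q - p - (p + q) * a) = 0 := by
    have h2A : (2 : ℝ) * (derivative P).eval a ≠ 0 := mul_ne_zero two_ne_zero hAne
    have : ((1 - a ^ 2) * S + (q - p - (p + q) * a)) * (2 * (derivative P).eval a) = 0 := by
      rw [← hODEa]; ring
    exact (mul_eq_zero.1 this).resolve_right h2A
  obtain ⟨hma, hma'⟩ := hx_mem k
  have h1 : a - 1 ≠ 0 := sub_ne_zero_of_ne (ne_of_lt hma')
  have h2 : a + 1 ≠ 0 := by
    intro h; rw [add_eq_zero_iff_eq_neg] at h; exact absurd h (ne_of_gt hma)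
  have hS : S = -(q - p - (p + q) * a) / (1 - a ^ 2) := by
    have h3 : (1 : ℝ) - a ^ 2 ≠ 0 := by
      intro h
      have : (1 - a) * (1 + a) = 0 := by ring_nf; linarith [h]
      rcases mul_eq_zero.1 this with h' | h'
      · exact h1 (by linarith)
      · exact h2 (by linarith)
    field_simp
    linarith [key]
  show S + p / (a - 1) + q / (a + 1) = 0
  rw [hS]
  have h3 : (1 : ℝ) - a ^ 2 ≠ 0 := by
    intro h
    have : (1 - a) * (1 + a) = 0 := by ring_nf; linarith [h]
    rcases mul_eq_zero.1 this with h' | h'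
    · exact h1 (by linarith)
    · exact h2 (by linarith)
  field_simp
  ring
end

section
/- (Stieltjes' non-uniqueness example) For every natural number n and every real C: π^{−1/2} e^{−1/4} ∫_0^∞ x^n (1 + C sin(2π log x)) e^{−(log x)^2} dx = e^{n(n+2)/4}. In particular, the moments of the measures with density x ↦ (1 + C sin(2π log x)) e^{−(log x)^2} on (0,∞) are independent of C for −1 < C < 1. -/
open MeasureTheory Real

lemma odd_integral_zero' {f : ℝ → ℝ} (h : ∀ x, f (-x) = - f x) : ∫ x, f x = 0 := by
  have h1 : ∫ x, f (-x) = ∫ x, f x := integral_neg_eq_self f volume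
  have h2 : ∫ x, f (-x) = - ∫ x, f x := by
    simp_rw [h]; exact integral_neg f
  linarith [h1 ▸ h2]

/-- **Stieltjes' non-uniqueness example.** For every `n : ℕ` and every real `C`,
`π^{-1/2} e^{-1/4} ∫₀^∞ xⁿ (1 + C sin(2π log x)) e^{-(log x)²} dx = e^{n(n+2)/4}`;
in particular the moments are independent of `C`. -/
theorem stieltjes_nonunique_moments (n : ℕ) (C : ℝ) :
    (Real.sqrt Real.pi)⁻¹ * Real.exp (-(1 / 4)) *
      ∫ x in Set.Ioi (0 : ℝ),
        x ^ n * (1 + C * Real.sin (2 * Real.pi * Real.log x)) *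
          Real.exp (-(Real.log x) ^ 2) =
    Real.exp ((n : ℝ) * ((n : ℝ) + 2) / 4) := by
  set a : ℝ := ((n : ℝ) + 1) / 2 with ha
  -- change of variables x = exp t
  have himg : Real.exp '' Set.univ = Set.Ioi (0 : ℝ) := by
    ext x
    simp only [Set.image_univ, Set.mem_range, Set.mem_Ioi]
    exact ⟨fun ⟨y, hy⟩ => hy ▸ Real.exp_pos y, fun hx => ⟨Real.log x, Real.exp_log hx⟩⟩
  rw [← himg, integral_image_eq_integral_abs_deriv_smul MeasurableSet.univ
        (fun x _ => (Real.hasDerivAt_exp x).hasDerivWithinAt) Real.exp_injective.injOn,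
      Measure.restrict_univ]
  -- rewrite the integrand
  have hintegrand : ∀ t : ℝ,
      |Real.exp t| • (Real.exp t ^ n *
          (1 + C * Real.sin (2 * Real.pi * Real.log (Real.exp t))) *
          Real.exp (-(Real.log (Real.exp t)) ^ 2)) =
      Real.exp (a ^ 2) *
        (Real.exp (-(t - a) ^ 2) +
          C * (Real.sin (2 * Real.pi * t) * Real.exp (-(t - a) ^ 2))) := by
    intro t
    rw [Real.log_exp, abs_of_pos (Real.exp_pos t), smul_eq_mul, ← Real.exp_nat_mul]
    have key : Real.exp t * Real.exp ((n : ℝ) * t) * Real.exp (-t ^ 2) =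
        Real.exp (a ^ 2) * Real.exp (-(t - a) ^ 2) := by
      rw [← Real.exp_add, ← Real.exp_add, ← Real.exp_add]
      congr 1
      rw [ha]; ring
    calc Real.exp t * (Real.exp ((n : ℝ) * t) *
            (1 + C * Real.sin (2 * Real.pi * t)) * Real.exp (-t ^ 2))
        = (Real.exp t * Real.exp ((n : ℝ) * t) * Real.exp (-t ^ 2)) *
            (1 + C * Real.sin (2 * Real.pi * t)) := by ring
      _ = (Real.exp (a ^ 2) * Real.exp (-(t - a) ^ 2)) *
            (1 + C * Real.sin (2 * Real.pi * t)) := by rw [key]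
      _ = _ := by ring
  simp_rw [hintegrand]
  -- integrability
  have h0 : Integrable (fun t : ℝ => Real.exp (-t ^ 2)) := by
    simpa using integrable_exp_neg_mul_sq (one_pos)
  have hI1 : Integrable (fun t : ℝ => Real.exp (-(t - a) ^ 2)) := h0.comp_sub_right a
  have hI2 : Integrable (fun t : ℝ => Real.sin (2 * Real.pi * t) * Real.exp (-(t - a) ^ 2)) :=
    hI1.bdd_mul (c := 1) (Continuous.aestronglyMeasurable (by continuity))
      (Filter.Eventually.of_forall fun x => by simpa using Real.abs_sin_le_one _)
  rw [integral_const_mul, integral_add hI1 (hI2.const_mul C), integral_const_mul]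
  -- the Gaussian integral
  have hG : (∫ t : ℝ, Real.exp (-(t - a) ^ 2)) = Real.sqrt Real.pi := by
    rw [integral_sub_right_eq_self (fun t => Real.exp (-t ^ 2)) a]
    simpa using integral_gaussian 1
  -- the sine integral vanishes
  have hS : (∫ t : ℝ, Real.sin (2 * Real.pi * t) * Real.exp (-(t - a) ^ 2)) = 0 := by
    rw [← integral_add_right_eq_self
      (fun t => Real.sin (2 * Real.pi * t) * Real.exp (-(t - a) ^ 2)) a]
    simp only [add_sub_cancel_right]
    apply odd_integral_zero'
    intro t
    have h1 : 2 * Real.pi * (-t + a) = 2 * Real.pi * (-t) + (↑(n + 1) : ℕ) * Real.pi := by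
      push_cast [ha]; ring
    have h2 : 2 * Real.pi * (t + a) = 2 * Real.pi * t + (↑(n + 1) : ℕ) * Real.pi := by
      push_cast [ha]; ring
    rw [h1, h2, Real.sin_add_nat_mul_pi, Real.sin_add_nat_mul_pi, neg_sq,
      mul_neg, Real.sin_neg]
    ring
  rw [hG, hS, mul_zero, add_zero]
  have hπ : Real.sqrt Real.pi ≠ 0 := by
    positivity
  rw [show (Real.sqrt Real.pi)⁻¹ * Real.exp (-(1 / 4)) *
        (Real.exp (a ^ 2) * Real.sqrt Real.pi) =
      (Real.exp (-(1 / 4)) * Real.exp (a ^ 2)) *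
        ((Real.sqrt Real.pi)⁻¹ * Real.sqrt Real.pi) by ring,
    inv_mul_cancel₀ hπ, mul_one, ← Real.exp_add]
  congr 1
  rw [ha]; ring
end

section
/- Let (p_n)_{n≥0} be a sequence of monic real polynomials with deg p_n = n satisfying x·p_0(x) = p_1(x) + b_0 p_0(x) and x·p_n(x) = p_{n+1}(x) + b_n p_n(x) + c_n p_{n−1}(x) for n ≥ 1, with c_n > 0 for all n ≥ 1. If the sequences (b_n) and (c_n) are both bounded, then there exists M > 0 such that every real zero of every p_n lies in [−M, M]. -/
open Polynomial

/-- If monic polynomials `pₙ` of degree `n` satisfy the three-term recurrence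
`x·pₙ(x) = p_{n+1}(x) + bₙ pₙ(x) + cₙ p_{n−1}(x)` with `cₙ > 0`, and the
sequences `(bₙ)` and `(cₙ)` are bounded, then all real zeros of all the `pₙ`
lie in a common bounded interval `[−M, M]`. -/
theorem bounded_recurrence_coefficients_bounded_zeros
    (p : ℕ → Polynomial ℝ)
    (hmonic : ∀ n : ℕ, (p n).Monic)
    (hdeg : ∀ n : ℕ, (p n).natDegree = n)
    (b c : ℕ → ℝ)
    (hrec0 : ∀ x : ℝ, x * (p 0).eval x = (p 1).eval x + b 0 * (p 0).eval x)
    (hrec : ∀ n : ℕ, 1 ≤ n → ∀ x : ℝ,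
      x * (p n).eval x =
        (p (n + 1)).eval x + b n * (p n).eval x + c n * (p (n - 1)).eval x)
    (hc_pos : ∀ n : ℕ, 1 ≤ n → 0 < c n)
    (hb_bdd : ∃ B : ℝ, ∀ n : ℕ, |b n| ≤ B)
    (hc_bdd : ∃ B : ℝ, ∀ n : ℕ, 1 ≤ n → |c n| ≤ B) :
    ∃ M : ℝ, 0 < M ∧ ∀ (n : ℕ) (x : ℝ), (p n).eval x = 0 → |x| ≤ M := by
  obtain ⟨Bb, hBb⟩ := hb_bdd
  obtain ⟨Bc, hBc⟩ := hc_bdd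
  set Bb' : ℝ := max Bb 0 with hBb'def
  set Bc' : ℝ := max Bc 0 with hBc'def
  have hBb' : ∀ n, |b n| ≤ Bb' := fun n => le_trans (hBb n) (le_max_left _ _)
  have hBc' : ∀ n, 1 ≤ n → |c n| ≤ Bc' := fun n hn => le_trans (hBc n hn) (le_max_left _ _)
  have hBb0 : (0:ℝ) ≤ Bb' := le_max_right _ _
  have hBc0 : (0:ℝ) ≤ Bc' := le_max_right _ _
  refine ⟨Bb' + Bc' + 1, by linarith, ?_⟩
  -- p 0 = 1
  have hp0 : ∀ x : ℝ, (p 0).eval x = 1 := by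
    intro x
    have h : p 0 = 1 := (Polynomial.Monic.natDegree_eq_zero (hmonic 0)).mp (hdeg 0)
    simp [h]
  -- main claim: if |x| > M then all |p n (x)| ≥ 1 and increasing
  have key : ∀ x : ℝ, Bb' + Bc' + 1 < |x| →
      ∀ n : ℕ, 1 ≤ |(p n).eval x| ∧ |(p n).eval x| ≤ |(p (n+1)).eval x| := by
    intro x hx
    have hxb : ∀ m : ℕ, Bc' + 1 ≤ |x - b m| := by
      intro m
      have h1 := hBb' m
      have h2 : |x| - |b m| ≤ |x - b m| := abs_sub_abs_le_abs_sub x (b m)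
      linarith
    intro n
    induction n with
    | zero =>
      have h1 : (p 1).eval x = x - b 0 := by
        have := hrec0 x
        rw [hp0 x] at this; linarith
      constructor
      · rw [hp0 x]; simp
      · rw [hp0 x, h1]
        have := hxb 0
        simp only [abs_one]
        linarith
    | succ n ih =>
      have h1 : 1 ≤ |(p (n+1)).eval x| := le_trans ih.1 ih.2
      refine ⟨h1, ?_⟩
      have hr := hrec (n+1) (by omega) x
      simp only [Nat.add_sub_cancel] at hr
      have heq : (p (n+2)).eval x = (x - b (n+1)) * (p (n+1)).eval x - c (n+1) * (p n).eval x := by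
        ring_nf
        ring_nf at hr
        linarith
      have habs : |(x - b (n+1)) * (p (n+1)).eval x| - |c (n+1) * (p n).eval x|
          ≤ |(p (n+2)).eval x| := by
        rw [heq]
        exact abs_sub_abs_le_abs_sub _ _
      rw [abs_mul, abs_mul] at habs
      have h2 := hxb (n+1)
      have h3 := hBc' (n+1) (by omega)
      have h4 := ih.2
      have h5 : (0:ℝ) ≤ |(p n).eval x| := abs_nonneg _
      have h6 : (0:ℝ) ≤ |(p (n+1)).eval x| := abs_nonneg _
      nlinarith [mul_le_mul_of_nonneg_right h2 h6,
        mul_le_mul (hBc' (n+1) (by omega)) h4 h5 hBc0]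
  intro n x hzero
  by_contra hgt
  push_neg at hgt
  have := (key x hgt n).1
  rw [hzero] at this
  rw [abs_zero] at this; linarith
end

section
/- (Stieltjes) Let μ be a positive Borel measure on ℝ with infinite support and all moments finite, μ_0 := μ(ℝ), and let (p_n)_{n≥0} be the monic orthogonal polynomials with respect to μ, satisfying x·p_n(x) = p_{n+1}(x) + b_n p_n(x) + c_n p_{n−1}(x) (n ≥ 1, c_n > 0) and x·p_0(x) = p_1(x) + b_0 p_0(x). Define the first associated (numerator) polynomials by p_0^{(1)}(x) = 1, p_1^{(1)}(x) = x − b_1, and x·p_n^{(1)}(x) = p_{n+1}^{(1)}(x) + b_{n+1} p_n^{(1)}(x) + c_{n+1} p_{n−1}^{(1)}(x) for n ≥ 1. Then for every n ≥ 1 and every real y: p_{n−1}^{(1)}(y) = (1/μ_0) ∫ (p_n(y) − p_n(x))/(y − x) dμ(x), where (p_n(y) − p_n(x))/(y − x) denotes the two-variable polynomial quotient. -/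
open MeasureTheory Polynomial

/-- **Stieltjes' integral representation of the numerator polynomials.** If `(pₙ)` are
the monic orthogonal polynomials for `μ` with recurrence coefficients `bₙ, cₙ`
(`cₙ > 0`) and `(pₙ⁽¹⁾)` are the first associated polynomials, then for `n ≥ 1`
and real `y`:
`pₙ₋₁⁽¹⁾(y) = (1/μ₀) ∫ (pₙ(y) − pₙ(x))/(y − x) dμ(x)`,
where the integrand is the polynomial quotient `(pₙ − pₙ(y))/(X − y)` evaluated
at `x`. -/
theorem numerator_polynomial_integral_representation
    (μ : Measure ℝ)
    (hsupp : (measureSupport μ).Infinite)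
    (hmom : ∀ n : ℕ, Integrable (fun x : ℝ => |x| ^ n) μ)
    (p : ℕ → Polynomial ℝ)
    (hmonic : ∀ n : ℕ, (p n).Monic)
    (hdeg : ∀ n : ℕ, (p n).natDegree = n)
    (horth : ∀ m n : ℕ, m ≠ n → ∫ x, (p m).eval x * (p n).eval x ∂μ = 0)
    (b c : ℕ → ℝ) (hc_pos : ∀ n : ℕ, 1 ≤ n → 0 < c n)
    (hrec0 : ∀ x : ℝ, x * (p 0).eval x = (p 1).eval x + b 0 * (p 0).eval x)
    (hrec : ∀ n : ℕ, 1 ≤ n → ∀ x : ℝ,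
      x * (p n).eval x =
        (p (n + 1)).eval x + b n * (p n).eval x + c n * (p (n - 1)).eval x)
    (q : ℕ → Polynomial ℝ)
    (hq0 : q 0 = 1) (hq1 : q 1 = X - C (b 1))
    (hqrec : ∀ n : ℕ, 1 ≤ n → ∀ x : ℝ,
      x * (q n).eval x =
        (q (n + 1)).eval x + b (n + 1) * (q n).eval x + c (n + 1) * (q (n - 1)).eval x) :
    ∀ n : ℕ, 1 ≤ n → ∀ y : ℝ,
      (q (n - 1)).eval y =
        ((μ Set.univ).toReal)⁻¹ *
          ∫ x, ((p n - C ((p n).eval y)) /ₘ (X - C y)).eval x ∂μ := by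
  intro n hn y
  -- basic facts about the measure
  have hμfin : μ Set.univ < ⊤ := by
    have h0 : Integrable (fun _ : ℝ => (1 : ℝ)) μ := by
      have := hmom 0
      simpa using this
    have := (integrable_const_iff (c := (1 : ℝ))).mp h0
    rcases this with h | h
    · exact absurd h one_ne_zero
    · simpa using h
  have hμpos : 0 < μ Set.univ := by
    obtain ⟨x, hx⟩ := hsupp.nonempty
    exact hx Set.univ Filter.univ_mem
  set μ₀ : ℝ := (μ Set.univ).toReal with hμ₀
  have hμ₀pos : 0 < μ₀ := ENNReal.toReal_pos hμpos.ne' hμfin.ne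
  have hμ₀ne : μ₀ ≠ 0 := hμ₀pos.ne'
  -- every polynomial is integrable
  have hInt : ∀ P : Polynomial ℝ, Integrable (fun x => P.eval x) μ := by
    intro P
    have heq : (fun x : ℝ => P.eval x)
        = fun x => ∑ i ∈ Finset.range (P.natDegree + 1), P.coeff i * x ^ i := by
      funext x
      rw [Polynomial.eval_eq_sum_range]
    rw [heq]
    apply integrable_finset_sum
    intro i _
    have hxi : Integrable (fun x : ℝ => x ^ i) μ := by
      refine (hmom i).mono' ?_ ?_
      · exact (continuous_pow i).aestronglyMeasurable
      · refine Filter.Eventually.of_forall fun x => ?_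
        simp [abs_pow]
    exact hxi.const_mul _
  -- p 0 = 1
  have hp0 : p 0 = 1 := by
    have h := hdeg 0
    exact (hmonic 0).natDegree_eq_zero.mp h
  -- ∫ p k = 0 for k ≥ 1
  have hint_pn : ∀ k : ℕ, 1 ≤ k → ∫ x, (p k).eval x ∂μ = 0 := by
    intro k hk
    have := horth k 0 (by omega)
    simpa [hp0] using this
  -- the quotient polynomials
  set R : ℕ → Polynomial ℝ := fun k => (p k - C ((p k).eval y)) /ₘ (X - C y) with hRdef
  have hR : ∀ k : ℕ, (X - C y) * R k = p k - C ((p k).eval y) := by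
    intro k
    apply (Polynomial.mul_divByMonic_eq_iff_isRoot).mpr
    simp [Polynomial.IsRoot]
  have hXyne : (X - C y : Polynomial ℝ) ≠ 0 := Polynomial.X_sub_C_ne_zero y
  -- polynomial form of recurrence
  have hPrec : ∀ k : ℕ, 1 ≤ k →
      (X : Polynomial ℝ) * p k = p (k + 1) + C (b k) * p k + C (c k) * p (k - 1) := by
    intro k hk
    apply Polynomial.funext
    intro x
    simpa using hrec k hk x
  -- polynomial recurrence for R
  have hRrec : ∀ k : ℕ, 1 ≤ k →
      C y * R k + p k = R (k + 1) + C (b k) * R k + C (c k) * R (k - 1) := by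
    intro k hk
    apply mul_left_cancel₀ hXyne
    have e1 := hR k
    have e2 := hR (k + 1)
    have e3 := hR (k - 1)
    have e4 := hPrec k hk
    have e5 : C (y * (p k).eval y)
        = C ((p (k + 1)).eval y) + C (b k * (p k).eval y)
          + C (c k * (p (k - 1)).eval y) := by
      rw [← Polynomial.C_add, ← Polynomial.C_add]
      exact congrArg C (hrec k hk y)
    simp only [Polynomial.C_mul] at e5
    linear_combination (C y) * e1 - e2 - C (b k) * e1 - C (c k) * e3 + e4 - e5
  -- integrals
  set F : ℕ → ℝ := fun k => ∫ x, (R k).eval x ∂μ with hFdef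
  have hF0 : F 0 = 0 := by
    have : R 0 = 0 := by
      simp [hRdef, hp0, Polynomial.zero_divByMonic]
    simp [hFdef, this]
  have hR1 : R 1 = 1 := by
    have hp1 : p 1 = X + C ((p 1).coeff 0) := (hmonic 1).eq_X_add_C (hdeg 1)
    have h : (X - C y) * R 1 = (X - C y) * 1 := by
      rw [hR 1, hp1]
      simp only [Polynomial.eval_add, Polynomial.eval_X, Polynomial.eval_C,
        Polynomial.C_add, mul_one]
      ring
    exact mul_left_cancel₀ hXyne h
  have hF1 : F 1 = μ₀ := by
    simp [hFdef, hR1, integral_const, hμ₀, smul_eq_mul]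
    rfl
  -- recurrence for F
  have hFrec : ∀ k : ℕ, 1 ≤ k →
      y * F k = F (k + 1) + b k * F k + c k * F (k - 1) := by
    intro k hk
    have hpt : ∀ x : ℝ, y * (R k).eval x + (p k).eval x
        = (R (k + 1)).eval x + b k * (R k).eval x + c k * (R (k - 1)).eval x := by
      intro x
      have := congrArg (Polynomial.eval x) (hRrec k hk)
      simpa using this
    have hL : ∫ x, (y * (R k).eval x + (p k).eval x) ∂μ
        = y * F k + ∫ x, (p k).eval x ∂μ := by
      rw [integral_add ((hInt (R k)).const_mul y) (hInt (p k)), integral_const_mul]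
    have hRfun : ∫ x, (y * (R k).eval x + (p k).eval x) ∂μ
        = F (k + 1) + b k * F k + c k * F (k - 1) := by
      have heq : (fun x => y * (R k).eval x + (p k).eval x)
          = fun x => (R (k + 1)).eval x + b k * (R k).eval x + c k * (R (k - 1)).eval x := by
        funext x; exact hpt x
      have hi1 : Integrable (fun x => b k * (R k).eval x) μ := (hInt (R k)).const_mul _
      have hi2 : Integrable (fun x => c k * (R (k - 1)).eval x) μ :=
        (hInt (R (k - 1))).const_mul _
      have hi3 : Integrable (fun x => (R (k + 1)).eval x + b k * (R k).eval x) μ :=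
        (hInt (R (k + 1))).add hi1
      rw [heq, integral_add hi3 hi2, integral_add (hInt (R (k + 1))) hi1,
        integral_const_mul, integral_const_mul]
    rw [hL, hint_pn k hk, add_zero] at hRfun
    exact hRfun
  -- main two-step induction
  have main : ∀ m : ℕ, (q m).eval y = μ₀⁻¹ * F (m + 1)
      ∧ (q (m + 1)).eval y = μ₀⁻¹ * F (m + 2) := by
    intro m
    induction m with
    | zero =>
      constructor
      · rw [hq0, hF1]
        simp [inv_mul_cancel₀ hμ₀ne]
      · have h1 := hFrec 1 le_rfl
        rw [hF0, hF1] at h1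
        have hF2 : F 2 = (y - b 1) * μ₀ := by linarith [h1]
        rw [hq1, hF2]
        field_simp
        simp
    | succ m ih =>
      refine ⟨ih.2, ?_⟩
      have hq' : y * (q (m + 1)).eval y = (q (m + 2)).eval y
          + b (m + 2) * (q (m + 1)).eval y + c (m + 2) * (q m).eval y :=
        hqrec (m + 1) (by omega) y
      have hF' : y * F (m + 2) = F (m + 3) + b (m + 2) * F (m + 2) + c (m + 2) * F (m + 1) :=
        hFrec (m + 2) (by omega)
      have ih1 := ih.1
      have ih2 := ih.2
      linear_combination (-1 : ℝ) * hq' + μ₀⁻¹ * hF' + (y - b (m + 2)) * ih2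
        - c (m + 2) * ih1
  obtain ⟨m, rfl⟩ : ∃ m, n = m + 1 := ⟨n - 1, by omega⟩
  simpa using (main m).1
end

section
/- (Orthogonality of Jacobi polynomials) For α, β > −1 define the Jacobi polynomial P_n^{(α,β)}(x) := ∑_{k=0}^{n} [(n+α+β+1)_k · (α+k+1)_{n−k} / (k! (n−k)!)] · ((x−1)/2)^k, where (a)_k denotes the shifted factorial. Then for all m ≠ n: ∫_{−1}^{1} P_m^{(α,β)}(x) P_n^{(α,β)}(x) (1−x)^α (1+x)^β dx = 0. -/
open MeasureTheory

/-- The shifted factorial (Pochhammer symbol) `(a)ₖ = a(a+1)⋯(a+k−1)`. -/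
def shiftedFactorial (a : ℝ) (k : ℕ) : ℝ := ∏ i ∈ Finset.range k, (a + i)

/-- The Jacobi polynomial `P_n^{(α,β)}`, as a function on `ℝ`, given by its
explicit hypergeometric expansion
`P_n^{(α,β)}(x) = ∑_{k=0}^{n} (n+α+β+1)ₖ (α+k+1)_{n−k} / (k! (n−k)!) ((x−1)/2)ᵏ`. -/
noncomputable def jacobiPoly (α β : ℝ) (n : ℕ) (x : ℝ) : ℝ :=
  ∑ k ∈ Finset.range (n + 1),
    shiftedFactorial ((n : ℝ) + α + β + 1) k * shiftedFactorial (α + k + 1) (n - k) /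
      ((Nat.factorial k : ℝ) * (Nat.factorial (n - k) : ℝ)) * ((x - 1) / 2) ^ k

open Set Finset Polynomial intervalIntegral

lemma sf_add (a : ℝ) (p q : ℕ) :
    shiftedFactorial a (p + q) = shiftedFactorial a p * shiftedFactorial (a + p) q := by
  unfold shiftedFactorial
  rw [Finset.prod_range_add]
  congr 1
  refine Finset.prod_congr rfl fun i _ => ?_
  push_cast; ring

lemma sf_pos {a : ℝ} (ha : 0 < a) (k : ℕ) : 0 < shiftedFactorial a k :=
  Finset.prod_pos fun i _ => by positivity

lemma sf_sum_eq (a : ℝ) {k n : ℕ} (h : k ≤ n) :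
    shiftedFactorial a k * shiftedFactorial (a + k) (n - k) = shiftedFactorial a n := by
  rw [← sf_add, Nat.add_sub_cancel' h]

lemma pascal_step (n : ℕ) (g : ℕ → ℝ) :
    ∑ k ∈ Finset.range (n + 2), (-1 : ℝ) ^ k * ((n + 1).choose k) * g k
      = ∑ k ∈ Finset.range (n + 1), (-1 : ℝ) ^ k * (n.choose k) * (g k - g (k + 1)) := by
  have h3 : ∑ k ∈ Finset.range (n + 2), (-1 : ℝ) ^ k * (n.choose k) * g k
      = ∑ k ∈ Finset.range (n + 1), (-1 : ℝ) ^ k * (n.choose k) * g k := by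
    rw [Finset.sum_range_succ, Nat.choose_succ_self]; simp
  have h1 : ∑ k ∈ Finset.range (n + 2), (-1 : ℝ) ^ k * ((n + 1).choose k) * g k
      = (∑ k ∈ Finset.range (n + 1), (-1 : ℝ) ^ (k + 1) * ((n + 1).choose (k + 1)) * g (k + 1))
        + g 0 := by
    rw [Finset.sum_range_succ']; simp
  have h2 : ∑ k ∈ Finset.range (n + 2), (-1 : ℝ) ^ k * (n.choose k) * g k
      = (∑ k ∈ Finset.range (n + 1), (-1 : ℝ) ^ (k + 1) * (n.choose (k + 1)) * g (k + 1))
        + g 0 := by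
    rw [Finset.sum_range_succ']; simp
  have key : ∀ k, (-1 : ℝ) ^ (k + 1) * ((n + 1).choose (k + 1)) * g (k + 1)
      = (-1 : ℝ) ^ (k + 1) * (n.choose k) * g (k + 1)
        + (-1 : ℝ) ^ (k + 1) * (n.choose (k + 1)) * g (k + 1) := by
    intro k
    rw [Nat.choose_succ_succ]
    push_cast; ring
  rw [h1, Finset.sum_congr rfl fun k _ => key k, Finset.sum_add_distrib]
  have h4 : ∑ k ∈ Finset.range (n + 1), (-1 : ℝ) ^ (k + 1) * (n.choose (k + 1)) * g (k + 1)
      = (∑ k ∈ Finset.range (n + 1), (-1 : ℝ) ^ k * (n.choose k) * g k) - g 0 := by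
    have := h2.symm.trans h3
    linarith [this]
  rw [h4]
  have : ∀ k, (-1 : ℝ) ^ (k + 1) * (n.choose k) * g (k + 1)
      = -((-1 : ℝ) ^ k * (n.choose k) * g (k + 1)) := by intro k; ring
  rw [Finset.sum_congr rfl fun k _ => this k, Finset.sum_neg_distrib]
  simp only [mul_sub, Finset.sum_sub_distrib]
  abel

lemma natDegree_diff_lt (p : Polynomial ℝ) (hp : 1 ≤ p.natDegree) :
    (p - p.comp (X + 1)).natDegree < p.natDegree := by
  have hX : (X + 1 : Polynomial ℝ).natDegree = 1 := by
    simpa using Polynomial.natDegree_X_add_C (1 : ℝ)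
  have hp0 : p ≠ 0 := fun h => by simp [h] at hp
  have hmon : (X + 1 : Polynomial ℝ).Monic := by
    simpa using Polynomial.monic_X_add_C (1 : ℝ)
  have hlc : (p.comp (X + 1)).leadingCoeff = p.leadingCoeff := by
    rw [Polynomial.leadingCoeff_comp (by rw [hX]; exact one_ne_zero), hmon.leadingCoeff,
      one_pow, mul_one]
  have hcomp0 : p.comp (X + 1) ≠ 0 := by
    intro h
    rw [← Polynomial.leadingCoeff_ne_zero, ← hlc, h] at hp0
    simp at hp0
  have hnd : (p.comp (X + 1)).natDegree = p.natDegree := by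
    rw [Polynomial.natDegree_comp, hX, mul_one]
  have hd : p.degree = (p.comp (X + 1)).degree := by
    rw [Polynomial.degree_eq_natDegree hp0, Polynomial.degree_eq_natDegree hcomp0, hnd]
  have := Polynomial.degree_sub_lt hd hp0 hlc.symm
  by_cases hq : p - p.comp (X + 1) = 0
  · rw [hq]; simp only [Polynomial.natDegree_zero]; omega
  · exact Polynomial.natDegree_lt_natDegree hq this

lemma alt_sum_poly : ∀ (n : ℕ) (p : Polynomial ℝ), p.natDegree < n →
    ∑ k ∈ Finset.range (n + 1), (-1 : ℝ) ^ k * (n.choose k) * p.eval (k : ℝ) = 0 := by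
  intro n
  induction n with
  | zero => intro p hp; omega
  | succ n ih =>
    intro p hp
    rcases Nat.eq_zero_or_pos n with rfl | hn
    · -- n+1 = 1, p constant
      obtain ⟨c, rfl⟩ := Polynomial.natDegree_eq_zero.mp (Nat.lt_one_iff.mp hp)
      simp [Finset.sum_range_succ]
    · have key : ∀ k : ℕ, p.eval (k : ℝ) - p.eval ((k + 1 : ℕ) : ℝ)
          = (p - p.comp (X + 1)).eval (k : ℝ) := by
        intro k
        rw [Polynomial.eval_sub, Polynomial.eval_comp]
        push_cast
        simp
      rw [show n + 1 + 1 = n + 2 from rfl, pascal_step n (fun k => p.eval (k : ℝ))]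
      simp only [key]
      rcases Nat.eq_zero_or_pos p.natDegree with h0 | h1
      · obtain ⟨c, rfl⟩ := Polynomial.natDegree_eq_zero.mp h0
        simp
      · exact ih _ (lt_of_lt_of_le (natDegree_diff_lt p h1) (Nat.lt_succ_iff.mp hp))

noncomputable def W (a b : ℝ) : ℝ → ℝ := fun x => (1 - x) ^ a * (1 + x) ^ b

lemma intW {a b : ℝ} (ha : -1 < a) (hb : -1 < b) :
    IntervalIntegrable (W a b) volume (-1) 1 := by
  have hA : IntervalIntegrable (fun x : ℝ => (1 - x) ^ a) volume 0 1 := by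
    have h1 : IntervalIntegrable (fun x : ℝ => x ^ a) volume 0 1 :=
      intervalIntegral.intervalIntegrable_rpow' ha
    have := h1.comp_sub_left 1
    simpa using this.symm
  have hB : IntervalIntegrable (fun x : ℝ => (1 + x) ^ b) volume (-1) 0 := by
    have h1 : IntervalIntegrable (fun x : ℝ => x ^ b) volume 0 1 :=
      intervalIntegral.intervalIntegrable_rpow' hb
    have := h1.comp_add_right 1
    simpa [add_comm] using this
  have hright : IntervalIntegrable (W a b) volume 0 1 := by
    have hcont : ContinuousOn (fun x : ℝ => (1 + x) ^ b) (Set.uIcc 0 1) := by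
      apply ContinuousOn.rpow_const (by fun_prop)
      intro x hx
      rw [Set.uIcc_of_le (by norm_num)] at hx
      left; nlinarith [hx.1]
    exact hA.mul_continuousOn hcont
  have hleft : IntervalIntegrable (W a b) volume (-1) 0 := by
    have hcont : ContinuousOn (fun x : ℝ => (1 - x) ^ a) (Set.uIcc (-1) 0) := by
      apply ContinuousOn.rpow_const (by fun_prop)
      intro x hx
      rw [Set.uIcc_of_le (by norm_num)] at hx
      left; nlinarith [hx.2]
    exact hB.continuousOn_mul hcont
  exact hleft.trans hright

lemma K_rec {a b : ℝ} (ha : -1 < a) (hb : -1 < b) :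
    (a + b + 2) * ∫ x in (-1 : ℝ)..1, W (a + 1) b x
      = 2 * (a + 1) * ∫ x in (-1 : ℝ)..1, W a b x := by
  set F : ℝ → ℝ := fun x => (1 - x) ^ (a + 1) * (1 + x) ^ (b + 1) with hF
  set f' : ℝ → ℝ := fun x => -(2 * (a + 1)) * W a b x + (a + b + 2) * W (a + 1) b x with hf'
  have ha1 : (0 : ℝ) < a + 1 := by linarith
  have hb1 : (0 : ℝ) < b + 1 := by linarith
  have hcont : ContinuousOn F (Set.Icc (-1 : ℝ) 1) := by
    apply ContinuousOn.mul
    · exact ContinuousOn.rpow_const (by fun_prop) (fun x _ => Or.inr ha1.le)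
    · exact ContinuousOn.rpow_const (by fun_prop) (fun x _ => Or.inr hb1.le)
  have hderiv : ∀ x ∈ Set.Ioo (-1 : ℝ) 1, HasDerivAt F (f' x) x := by
    intro x hx
    have hu : (0 : ℝ) < 1 - x := by linarith [hx.2]
    have hv : (0 : ℝ) < 1 + x := by linarith [hx.1]
    have h1 : HasDerivAt (fun x : ℝ => (1 - x) ^ (a + 1))
        (-1 * (a + 1) * (1 - x) ^ a) x := by
      have hbase : HasDerivAt (fun x : ℝ => 1 - x) (-1) x := by
        simpa using (hasDerivAt_id x).const_sub 1
      have := hbase.rpow_const (p := a + 1) (Or.inl hu.ne')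
      rwa [show a + 1 - 1 = a by ring] at this
    have h2 : HasDerivAt (fun x : ℝ => (1 + x) ^ (b + 1))
        (1 * (b + 1) * (1 + x) ^ b) x := by
      have hbase : HasDerivAt (fun x : ℝ => 1 + x) 1 x := by
        simpa using (hasDerivAt_id x).const_add 1
      have := hbase.rpow_const (p := b + 1) (Or.inl hv.ne')
      rwa [show b + 1 - 1 = b by ring] at this
    have := h1.mul h2
    refine this.congr_deriv ?_
    rw [hf']
    simp only [W]
    rw [Real.rpow_add_one hu.ne', Real.rpow_add_one hv.ne']
    ring
  have hint : IntervalIntegrable f' volume (-1) 1 := by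
    exact ((intW ha hb).const_mul _).add
      (((intW (by linarith : (-1:ℝ) < a + 1) hb).const_mul _))
  have hftc := intervalIntegral.integral_eq_sub_of_hasDeriv_right_of_le (by norm_num)
    hcont (fun x hx => (hderiv x hx).hasDerivWithinAt) hint
  have hF1 : F 1 = 0 := by simp [hF, Real.zero_rpow ha1.ne']
  have hFm1 : F (-1) = 0 := by
    simp [hF]
    rw [Real.zero_rpow hb1.ne']
    simp
  rw [hF1, hFm1, sub_zero] at hftc
  rw [hf'] at hftc
  rw [intervalIntegral.integral_add ((intW ha hb).const_mul _)
      ((intW (by linarith : (-1:ℝ) < a + 1) hb).const_mul _),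
    intervalIntegral.integral_const_mul, intervalIntegral.integral_const_mul] at hftc
  linarith [hftc]

lemma inner_sum_zero (α β : ℝ) (hα : -1 < α) (hβ : -1 < β) {j n : ℕ} (hj : j < n) :
    ∑ k ∈ Finset.range (n + 1),
      shiftedFactorial ((n : ℝ) + α + β + 1) k * shiftedFactorial (α + k + 1) (n - k) /
        ((Nat.factorial k : ℝ) * (Nat.factorial (n - k) : ℝ)) *
      ((-1 : ℝ) ^ k * shiftedFactorial (α + 1) (j + k) / shiftedFactorial (α + β + 2) (j + k))
      = 0 := by
  set s1 : ℝ := α + β + 2 with hs1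
  set d : ℕ := n - 1 - j with hd
  have hjd : j + d + 1 = n := by omega
  have hs1pos : (0 : ℝ) < s1 := by rw [hs1]; linarith
  -- the polynomial
  set P : Polynomial ℝ :=
    (∏ i ∈ Finset.range j, (X + C (α + 1 + i))) *
      (∏ i ∈ Finset.range d, (X + C (s1 + j + i))) with hP
  have hPdeg : P.natDegree < n := by
    rw [hP, Polynomial.natDegree_mul, Polynomial.natDegree_prod_of_monic,
      Polynomial.natDegree_prod_of_monic]
    · simp only [Polynomial.natDegree_X_add_C]
      simp only [Finset.sum_const, Finset.card_range, smul_eq_mul, mul_one]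
      omega
    · intro i _; exact Polynomial.monic_X_add_C _
    · intro i _; exact Polynomial.monic_X_add_C _
    · exact ((Polynomial.monic_prod_of_monic _ _ fun i _ => Polynomial.monic_X_add_C _).ne_zero)
    · exact ((Polynomial.monic_prod_of_monic _ _ fun i _ => Polynomial.monic_X_add_C _).ne_zero)
  have hPeval : ∀ k : ℕ, P.eval (k : ℝ)
      = shiftedFactorial (α + 1 + k) j * shiftedFactorial (s1 + j + k) d := by
    intro k
    rw [hP, Polynomial.eval_mul, Polynomial.eval_prod, Polynomial.eval_prod]
    unfold shiftedFactorial
    congr 1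
    · exact Finset.prod_congr rfl fun i _ => by simp; ring
    · exact Finset.prod_congr rfl fun i _ => by simp; ring
  set C0 : ℝ := shiftedFactorial (α + 1) n /
      ((Nat.factorial n : ℝ) * shiftedFactorial s1 j * shiftedFactorial (s1 + j) d) with hC0
  have key : ∀ k ∈ Finset.range (n + 1),
      shiftedFactorial ((n : ℝ) + α + β + 1) k * shiftedFactorial (α + k + 1) (n - k) /
        ((Nat.factorial k : ℝ) * (Nat.factorial (n - k) : ℝ)) *
      ((-1 : ℝ) ^ k * shiftedFactorial (α + 1) (j + k) / shiftedFactorial (α + β + 2) (j + k))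
      = C0 * ((-1 : ℝ) ^ k * (n.choose k) * P.eval (k : ℝ)) := by
    intro k hk
    have hkn : k ≤ n := Nat.lt_succ_iff.mp (Finset.mem_range.mp hk)
    have h2 : shiftedFactorial (α + 1) k * shiftedFactorial (α + k + 1) (n - k)
        = shiftedFactorial (α + 1) n := by
      have := sf_sum_eq (α + 1) hkn
      rw [show α + 1 + (k : ℝ) = α + k + 1 by ring] at this
      exact this
    have h1 : shiftedFactorial (α + 1) (j + k)
        = shiftedFactorial (α + 1) k * shiftedFactorial (α + 1 + k) j := by
      rw [add_comm j k, sf_add]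
    have h3 : shiftedFactorial s1 (j + k)
        = shiftedFactorial s1 j * shiftedFactorial (s1 + j) k := sf_add _ _ _
    have h4 : shiftedFactorial ((n : ℝ) + α + β + 1) k * shiftedFactorial (s1 + j) d
        = shiftedFactorial (s1 + j) k * shiftedFactorial (s1 + j + k) d := by
      have hA := sf_add (s1 + j) d k
      have hB := sf_add (s1 + j) k d
      have hnd : s1 + (j : ℝ) + (d : ℝ) = (n : ℝ) + α + β + 1 := by
        rw [hs1]
        have : ((j : ℝ) + d + 1) = (n : ℝ) := by exact_mod_cast congrArg (Nat.cast : ℕ → ℝ) hjd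
        linarith
      rw [hnd] at hA
      rw [add_comm d k] at hA
      rw [hA] at hB
      linarith [hB]
    have hfact : (Nat.factorial n : ℝ)
        = (n.choose k : ℝ) * (Nat.factorial k) * (Nat.factorial (n - k)) := by
      exact_mod_cast (Nat.choose_mul_factorial_mul_factorial hkn).symm
    have hkf : (0:ℝ) < (Nat.factorial k : ℝ) := by positivity
    have hnkf : (0:ℝ) < (Nat.factorial (n - k) : ℝ) := by positivity
    have hsf1 : (0:ℝ) < shiftedFactorial s1 (j + k) := sf_pos hs1pos _
    have hsj : (0:ℝ) < s1 + j := by positivity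
    have hsfj : (0:ℝ) < shiftedFactorial s1 j := sf_pos hs1pos _
    have hsfk : (0:ℝ) < shiftedFactorial (s1 + j) k := sf_pos hsj _
    have hsfd : (0:ℝ) < shiftedFactorial (s1 + j) d := sf_pos hsj _
    have hnf : (0:ℝ) < (Nat.factorial n : ℝ) := by positivity
    rw [hPeval k, hC0, ← hs1]
    rw [div_mul_div_comm, div_mul_eq_mul_div, div_eq_div_iff (by positivity) (by positivity)]
    rw [h1, h3, hfact]
    linear_combination
      ((-1:ℝ)^k * (n.choose k : ℝ) * (Nat.factorial k : ℝ) * (Nat.factorial (n-k) : ℝ) *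
        shiftedFactorial s1 j * shiftedFactorial (α + 1 + k) j *
        shiftedFactorial (α + 1) k * shiftedFactorial (α + k + 1) (n - k)) * h4 +
      ((-1:ℝ)^k * (n.choose k : ℝ) * (Nat.factorial k : ℝ) * (Nat.factorial (n-k) : ℝ) *
        shiftedFactorial s1 j * shiftedFactorial (α + 1 + k) j *
        shiftedFactorial (s1 + j) k * shiftedFactorial (s1 + j + k) d) * h2
  rw [Finset.sum_congr rfl key, ← Finset.mul_sum]
  have := alt_sum_poly n P hPdeg
  rw [this, mul_zero]

noncomputable def jc (α β : ℝ) (n k : ℕ) : ℝ :=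
  shiftedFactorial ((n : ℝ) + α + β + 1) k * shiftedFactorial (α + k + 1) (n - k) /
      ((Nat.factorial k : ℝ) * (Nat.factorial (n - k) : ℝ))

lemma sf_zero (a : ℝ) : shiftedFactorial a 0 = 1 := by simp [shiftedFactorial]

lemma sf_succ (a : ℝ) (p : ℕ) :
    shiftedFactorial a (p + 1) = shiftedFactorial a p * (a + p) := by
  rw [sf_add]; simp [shiftedFactorial]

lemma K_pow {α β : ℝ} (hα : -1 < α) (hβ : -1 < β) (p : ℕ) :
    ∫ x in (-1 : ℝ)..1, W (α + p) β x
      = 2 ^ p * shiftedFactorial (α + 1) p / shiftedFactorial (α + β + 2) p *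
        ∫ x in (-1 : ℝ)..1, W α β x := by
  induction p with
  | zero => simp [sf_zero]
  | succ p ih =>
    have hap : -1 < α + (p : ℝ) := by
      have : (0:ℝ) ≤ p := Nat.cast_nonneg p
      linarith
    have hrec := K_rec hap hβ
    have hden : (0:ℝ) < α + (p:ℝ) + β + 2 := by
      have : (0:ℝ) ≤ p := Nat.cast_nonneg p
      linarith
    have hcast : α + ((p : ℕ) + 1 : ℕ) = (α + (p:ℝ)) + 1 := by push_cast; ring
    rw [hcast, show (∫ x in (-1:ℝ)..1, W (α + (p:ℝ) + 1) β x)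
        = 2 * (α + (p:ℝ) + 1) / (α + (p:ℝ) + β + 2) * ∫ x in (-1:ℝ)..1, W (α + (p:ℝ)) β x by
      field_simp
      linarith [hrec]]
    rw [ih, sf_succ, sf_succ]
    have h1 : shiftedFactorial (α + β + 2) p ≠ 0 := by
      have : (0:ℝ) < α + β + 2 := by linarith
      exact (sf_pos this p).ne'
    have h2 : shiftedFactorial (α + β + 2) p * (α + β + 2 + p) ≠ 0 := by
      have : (0:ℝ) < α + β + 2 := by linarith
      exact (mul_pos (sf_pos this p) (by linarith [Nat.cast_nonneg (α := ℝ) p])).ne'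
    have h3 := hden.ne'
    rw [show α + β + 2 + (p:ℝ) = α + p + β + 2 by ring]
    field_simp
    ring

lemma ioo_interval (f : ℝ → ℝ) :
    ∫ x in Set.Ioo (-1 : ℝ) 1, f x = ∫ x in (-1 : ℝ)..1, f x := by
  rw [intervalIntegral.integral_of_le (by norm_num), integral_Ioc_eq_integral_Ioo]

lemma Jp {α β : ℝ} (hα : -1 < α) (hβ : -1 < β) (p : ℕ) :
    ∫ x in Set.Ioo (-1 : ℝ) 1, ((x - 1) / 2) ^ p * W α β x
      = (-1 : ℝ) ^ p * shiftedFactorial (α + 1) p / shiftedFactorial (α + β + 2) p *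
        ∫ x in Set.Ioo (-1 : ℝ) 1, W α β x := by
  have hcong : ∫ x in Set.Ioo (-1 : ℝ) 1, ((x - 1) / 2) ^ p * W α β x
      = ∫ x in Set.Ioo (-1 : ℝ) 1, ((-1 : ℝ) / 2) ^ p * W (α + p) β x := by
    apply MeasureTheory.setIntegral_congr_fun measurableSet_Ioo
    intro x hx
    have hu : (0:ℝ) < 1 - x := by linarith [hx.2]
    have hv : (0:ℝ) < 1 + x := by linarith [hx.1]
    simp only [W]
    rw [Real.rpow_add hu α p, Real.rpow_natCast]
    rw [show (x - 1) / 2 = (-1 : ℝ)/2 * (1 - x) by ring, mul_pow]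
    ring
  rw [hcong, MeasureTheory.integral_const_mul, ioo_interval, ioo_interval, K_pow hα hβ p]
  have h1 : shiftedFactorial (α + β + 2) p ≠ 0 :=
    (sf_pos (by linarith : (0:ℝ) < α + β + 2) p).ne'
  rw [div_pow, ← mul_assoc]
  field_simp

lemma jacobi_aux (α β : ℝ) (hα : -1 < α) (hβ : -1 < β) {m n : ℕ} (hmn : m < n) :
    ∫ x in Set.Ioo (-1 : ℝ) 1,
      jacobiPoly α β m x * jacobiPoly α β n x * (1 - x) ^ α * (1 + x) ^ β = 0 := by
  have expand : ∀ x : ℝ,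
      jacobiPoly α β m x * jacobiPoly α β n x * (1 - x) ^ α * (1 + x) ^ β
        = ∑ q ∈ Finset.range (m + 1) ×ˢ Finset.range (n + 1),
            (jc α β m q.1 * jc α β n q.2) * (((x - 1) / 2) ^ (q.1 + q.2) * W α β x) := by
    intro x
    rw [jacobiPoly, jacobiPoly, Finset.sum_mul_sum, ← Finset.sum_product']
    simp only [Finset.sum_mul]
    refine Finset.sum_congr rfl fun q _ => ?_
    simp only [jc, W]
    ring
  have hint : ∀ q ∈ Finset.range (m + 1) ×ˢ Finset.range (n + 1),
      MeasureTheory.IntegrableOn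
        (fun x => (jc α β m q.1 * jc α β n q.2) * (((x - 1) / 2) ^ (q.1 + q.2) * W α β x))
        (Set.Ioo (-1 : ℝ) 1) volume := by
    intro q _
    apply MeasureTheory.Integrable.const_mul
    have hcont : ContinuousOn (fun x : ℝ => ((x - 1) / 2) ^ (q.1 + q.2))
        (Set.uIcc (-1 : ℝ) 1) := by fun_prop
    have := (intW hα hβ).continuousOn_mul hcont
    have h2 := (intervalIntegrable_iff_integrableOn_Ioo_of_le (by norm_num : (-1:ℝ) ≤ 1)).mp this
    exact h2
  simp only [expand]
  rw [MeasureTheory.integral_finset_sum _ hint]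
  have hterm : ∀ q ∈ Finset.range (m + 1) ×ˢ Finset.range (n + 1),
      ∫ x in Set.Ioo (-1 : ℝ) 1,
          (jc α β m q.1 * jc α β n q.2) * (((x - 1) / 2) ^ (q.1 + q.2) * W α β x)
        = (jc α β m q.1 * jc α β n q.2) *
            ((-1 : ℝ) ^ (q.1 + q.2) * shiftedFactorial (α + 1) (q.1 + q.2) /
              shiftedFactorial (α + β + 2) (q.1 + q.2) * ∫ x in Set.Ioo (-1 : ℝ) 1, W α β x) := by
    intro q _
    rw [MeasureTheory.integral_const_mul, Jp hα hβ]
  rw [Finset.sum_congr rfl hterm, Finset.sum_product]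
  apply Finset.sum_eq_zero
  intro j hj
  have hjn : j < n := lt_of_le_of_lt (Nat.lt_succ_iff.mp (Finset.mem_range.mp hj)) hmn
  have factor : ∀ k ∈ Finset.range (n + 1),
      (jc α β m j * jc α β n k) *
          ((-1 : ℝ) ^ (j + k) * shiftedFactorial (α + 1) (j + k) /
            shiftedFactorial (α + β + 2) (j + k) * ∫ x in Set.Ioo (-1 : ℝ) 1, W α β x)
        = (jc α β m j * (-1 : ℝ) ^ j * ∫ x in Set.Ioo (-1 : ℝ) 1, W α β x) *
            (jc α β n k * ((-1 : ℝ) ^ k * shiftedFactorial (α + 1) (j + k) /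
              shiftedFactorial (α + β + 2) (j + k))) := by
    intro k _
    rw [pow_add]
    ring
  rw [Finset.sum_congr rfl factor, ← Finset.mul_sum]
  have := inner_sum_zero α β hα hβ hjn
  simp only [jc]
  rw [show (∑ k ∈ Finset.range (n + 1),
      shiftedFactorial ((n : ℝ) + α + β + 1) k * shiftedFactorial (α + k + 1) (n - k) /
        ((Nat.factorial k : ℝ) * (Nat.factorial (n - k) : ℝ)) *
      ((-1 : ℝ) ^ k * shiftedFactorial (α + 1) (j + k) / shiftedFactorial (α + β + 2) (j + k)))
      = 0 from this, mul_zero]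

/-- **Orthogonality of Jacobi polynomials.** For `α, β > −1` and `m ≠ n`,
`∫_{−1}^{1} P_m^{(α,β)}(x) P_n^{(α,β)}(x) (1−x)^α (1+x)^β dx = 0`. -/
theorem jacobi_orthogonality
    (α β : ℝ) (hα : -1 < α) (hβ : -1 < β)
    (m n : ℕ) (hmn : m ≠ n) :
    ∫ x in Set.Ioo (-1 : ℝ) 1,
      jacobiPoly α β m x * jacobiPoly α β n x * (1 - x) ^ α * (1 + x) ^ β = 0 := by
  rcases lt_or_gt_of_ne hmn with h | h
  · exact jacobi_aux α β hα hβ h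
  · have := jacobi_aux α β hα hβ h
    rw [← this]
    apply MeasureTheory.setIntegral_congr_fun measurableSet_Ioo
    intro x _
    simp only []
    rw [mul_comm (jacobiPoly α β m x) (jacobiPoly α β n x)]
end
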